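/- arXiv:1910.07021 — 8 statements merged into one kernel-verified Lean document; each statement's English description precedes it below -/
import Mathlib

section
/- Every archimedean left-ordered group is order-isomorphic to a subgroup of the additive group of real numbers with its natural order; in particular every archimedean left-ordered group is commutative. -/
open Function Filter Topology

namespace Stmt3Aux

variable {G : Type*} [Group G] [LinearOrder G]

/-- cancel a common left factor in a strict inequality (left-invariance only) -/
theorem ltCancel (hinv : ∀ a b c : G, a ≤ b → c * a ≤ c * b)
    {a b c : G} (h : c * a < c * b) : a < b := by
  by_contra hh
  push_neg at hh
  exact absurd (hinv b a c hh) (not_le_of_gt h)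

theorem ltMul (hinv : ∀ a b c : G, a ≤ b → c * a ≤ c * b)
    {a b : G} (c : G) (h : a < b) : c * a < c * b :=
  lt_of_le_of_ne (hinv a b c h.le) fun e => h.ne (mul_left_cancel e)

theorem onelePow (hinv : ∀ a b c : G, a ≤ b → c * a ≤ c * b)
    {g : G} (hg : 1 ≤ g) : ∀ n : ℕ, (1 : G) ≤ g ^ n := by
  intro n
  induction n with
  | zero => simp
  | succ n ih =>
    have h1 : g * 1 ≤ g * g ^ n := hinv _ _ _ ih
    rw [mul_one] at h1
    calc (1:G) ≤ g := hg
      _ ≤ g * g ^ n := h1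
      _ = g ^ (n+1) := by rw [pow_succ']

/-- In an archimedean left-ordered group, conjugates of positive elements are positive. -/
theorem conj_pos (hinv : ∀ a b c : G, a ≤ b → c * a ≤ c * b)
    (harch : ∀ a b : G, 1 < b → ∃ n : ℕ, a < b ^ n)
    {g : G} (hg : 1 < g) (h : G) : 1 < h * g * h⁻¹ := by
  by_contra hcon
  push_neg at hcon
  have hne : h * g * h⁻¹ ≠ 1 := by
    intro e
    have hg1 : g = 1 := by
      have := congrArg (fun x => h⁻¹ * x * h) e
      simpa [mul_assoc] using this
    rw [hg1] at hg
    exact lt_irrefl _ hg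
  have hlt : h * g * h⁻¹ < 1 := hcon.lt_of_ne hne
  -- 1 < h * g⁻¹ * h⁻¹
  have hpos : 1 < h * g⁻¹ * h⁻¹ := by
    have h2 : (h * g * h⁻¹)⁻¹ * (h * g * h⁻¹) < (h * g * h⁻¹)⁻¹ * 1 :=
      ltMul hinv _ hlt
    rw [inv_mul_cancel, mul_one] at h2
    have he : (h * g * h⁻¹)⁻¹ = h * g⁻¹ * h⁻¹ := by group
    rwa [he] at h2
  obtain ⟨n, hn⟩ := harch h (h * g⁻¹ * h⁻¹) hpos
  rw [conj_pow] at hn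
  have hn' : h * 1 < h * (g⁻¹ ^ n * h⁻¹) := by
    rw [mul_one, ← mul_assoc]; exact hn
  have h1 : (1 : G) < g⁻¹ ^ n * h⁻¹ := ltCancel hinv hn'
  have h2 : g ^ n < h⁻¹ := by
    have h3 : g ^ n * 1 < g ^ n * (g⁻¹ ^ n * h⁻¹) := ltMul hinv _ h1
    rw [mul_one, inv_pow, ← mul_assoc, mul_inv_cancel, one_mul] at h3
    exact h3
  have h4 : 1 < h⁻¹ := lt_of_le_of_lt (onelePow hinv hg.le n) h2
  -- g * h⁻¹ < h⁻¹
  have h5 : g * h⁻¹ < h⁻¹ := by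
    refine ltCancel hinv (c := h) ?_
    rw [← mul_assoc, mul_inv_cancel]
    exact hlt
  have h6 : ∀ k : ℕ, g ^ k * h⁻¹ ≤ h⁻¹ := by
    intro k
    induction k with
    | zero => simp
    | succ k ih =>
      have he : g ^ (k+1) * h⁻¹ = g ^ k * (g * h⁻¹) := by
        rw [pow_succ, mul_assoc]
      rw [he]
      exact le_trans (hinv _ _ _ h5.le) ih
  obtain ⟨m, hm⟩ := harch h⁻¹ g hg
  have h7 : g ^ m * h⁻¹ < g ^ m * 1 := by
    rw [mul_one]; exact lt_of_le_of_lt (h6 m) hm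
  have h8 : h⁻¹ < 1 := ltCancel hinv h7
  exact absurd h8 (not_lt_of_gt h4)

/-- right invariance -/
theorem rinv (hinv : ∀ a b c : G, a ≤ b → c * a ≤ c * b)
    (harch : ∀ a b : G, 1 < b → ∃ n : ℕ, a < b ^ n) :
    ∀ a b c : G, a ≤ b → a * c ≤ b * c := by
  intro a b c h
  rcases h.eq_or_lt with rfl | h
  · exact le_refl _
  have h1 : 1 < a⁻¹ * b := by
    have := ltMul hinv a⁻¹ h
    rwa [inv_mul_cancel] at this
  have h2 : 1 < c⁻¹ * (a⁻¹ * b) * c⁻¹⁻¹ := conj_pos hinv harch h1 c⁻¹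
  rw [inv_inv] at h2
  have h3 : (a * c) * 1 < (a * c) * (c⁻¹ * (a⁻¹ * b) * c) := ltMul hinv _ h2
  have he : (a * c) * (c⁻¹ * (a⁻¹ * b) * c) = b * c := by group
  rw [mul_one, he] at h3
  exact h3.le

/-- bracketing by powers of a fixed positive element -/
theorem bracket (hinv : ∀ a b c : G, a ≤ b → c * a ≤ c * b)
    (harch : ∀ a b : G, 1 < b → ∃ n : ℕ, a < b ^ n)
    {b : G} (hb : 1 < b) (x : G) : ∃ m : ℤ, b ^ m ≤ x ∧ x < b ^ (m + 1) := by
  haveI : CovariantClass G G (· * ·) (· ≤ ·) := ⟨fun c a b h => hinv a b c h⟩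
  haveI : CovariantClass G G (swap (· * ·)) (· ≤ ·) :=
    ⟨fun c a b h => rinv hinv harch a b c h⟩
  have hmono : StrictMono fun m : ℤ => b ^ m := by
    intro m n h
    have hpos : (0:ℤ) < n - m := sub_pos.mpr h
    have h1 : (1 : G) < b ^ (n - m) := by
      rw [← Int.toNat_of_nonneg hpos.le, zpow_natCast]
      exact one_lt_pow' hb (by omega)
    calc b ^ m = b ^ m * 1 := (mul_one _).symm
      _ < b ^ m * b ^ (n - m) := mul_lt_mul_right h1 _
      _ = b ^ n := by rw [← zpow_add]; ring_nf
  obtain ⟨k, hk⟩ := harch x⁻¹ b hb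
  have hk' : b ^ (-(k:ℤ)) ≤ x := by
    have h1 : (b ^ k)⁻¹ < x := inv_lt'.mp hk
    rw [← zpow_natCast, ← zpow_neg] at h1
    exact h1.le
  obtain ⟨K, hK⟩ := harch x b hb
  have hbdd : ∀ z : ℤ, b ^ z ≤ x → z ≤ (K:ℤ) := by
    intro z hz
    have h1 : b ^ z < b ^ (K:ℤ) := lt_of_le_of_lt hz (by rw [zpow_natCast]; exact hK)
    exact (hmono.lt_iff_lt.mp h1).le
  obtain ⟨m, hm1, hm2⟩ :=
    Int.exists_greatest_of_bdd (P := fun z : ℤ => b ^ z ≤ x) ⟨(K:ℤ), hbdd⟩ ⟨-(k:ℤ), hk'⟩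
  refine ⟨m, hm1, ?_⟩
  by_contra hcon
  push_neg at hcon
  have := hm2 _ hcon
  omega

/-- archimedean left-ordered groups are commutative -/
theorem comm (hinv : ∀ a b c : G, a ≤ b → c * a ≤ c * b)
    (harch : ∀ a b : G, 1 < b → ∃ n : ℕ, a < b ^ n) :
    ∀ a b : G, a * b = b * a := by
  haveI : CovariantClass G G (· * ·) (· ≤ ·) := ⟨fun c a b h => hinv a b c h⟩
  haveI : CovariantClass G G (swap (· * ·)) (· ≤ ·) :=
    ⟨fun c a b h => rinv hinv harch a b c h⟩
  by_cases hex : ∃ g : G, 1 < g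
  swap
  · push_neg at hex
    have htriv : ∀ g : G, g = 1 := fun g =>
      le_antisymm (hex g) (by simpa using inv_le_one'.mp (hex g⁻¹))
    intro a b
    rw [htriv a, htriv b]
  obtain ⟨b0, hb0⟩ := hex
  by_cases hmin : ∃ c : G, 1 < c ∧ ∀ x, 1 < x → c ≤ x
  · -- discrete case: cyclic
    obtain ⟨c, hc, hcm⟩ := hmin
    have hrep : ∀ g : G, ∃ m : ℤ, g = c ^ m := by
      intro g
      obtain ⟨m, h1, h2⟩ := bracket hinv harch hc g
      refine ⟨m, ?_⟩
      have h3 : (1:G) ≤ (c ^ m)⁻¹ * g := by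
        have := hinv _ _ (c ^ m)⁻¹ h1
        rwa [inv_mul_cancel] at this
      have h4 : (c ^ m)⁻¹ * g < c := by
        have h5 := mul_lt_mul_right h2 (c ^ m)⁻¹
        have he : (c ^ m)⁻¹ * c ^ (m+1) = c := by
          rw [← zpow_neg, ← zpow_add]; ring_nf; exact zpow_one c
        rwa [he] at h5
      rcases h3.eq_or_lt with he | hlt
      · rw [← mul_one (c ^ m), he, ← mul_assoc, mul_inv_cancel, one_mul]
      · exact absurd (hcm _ hlt) (not_le_of_gt h4)
    intro a b
    obtain ⟨m, rfl⟩ := hrep a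
    obtain ⟨n, rfl⟩ := hrep b
    rw [← zpow_add, ← zpow_add, add_comm]
  · -- dense case
    push_neg at hmin
    have hsq : ∀ ε : G, 1 < ε → ∃ δ : G, 1 < δ ∧ δ * δ < ε := by
      intro ε hε
      obtain ⟨δ0, hδ0, hδ0'⟩ := hmin ε hε
      have h1 : 1 < δ0⁻¹ * ε := by
        have := mul_lt_mul_right hδ0' δ0⁻¹
        rwa [inv_mul_cancel] at this
      obtain ⟨δ, hδ, hδ'⟩ := hmin (min δ0 (δ0⁻¹ * ε)) (lt_min hδ0 h1)
      refine ⟨δ, hδ, ?_⟩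
      calc δ * δ < δ0 * (δ0⁻¹ * ε) :=
            mul_lt_mul_of_lt_of_lt (lt_of_lt_of_le hδ' (min_le_left _ _))
              (lt_of_lt_of_le hδ' (min_le_right _ _))
        _ = ε := by rw [← mul_assoc, mul_inv_cancel, one_mul]
    have hcomle : ∀ a b : G, a * b * a⁻¹ * b⁻¹ ≤ 1 := by
      intro a b
      by_contra hcon
      push_neg at hcon
      obtain ⟨δ, hδ, hδ2⟩ := hsq _ hcon
      obtain ⟨m, ham, ham'⟩ := bracket hinv harch hδ a
      obtain ⟨n, hbn, hbn'⟩ := bracket hinv harch hδ b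
      have h1 : a * b < δ ^ (m+1) * δ ^ (n+1) := mul_lt_mul_of_lt_of_lt ham' hbn'
      have h2 : δ ^ n * δ ^ m ≤ b * a := mul_le_mul' hbn ham
      have h3 : a * b * (b * a)⁻¹ < (δ ^ (m+1) * δ ^ (n+1)) * (δ ^ n * δ ^ m)⁻¹ := by
        calc a * b * (b * a)⁻¹ ≤ a * b * (δ ^ n * δ ^ m)⁻¹ :=
              mul_le_mul_right (inv_le_inv_iff.mpr h2) _
          _ < _ := mul_lt_mul_left h1 _
      have h4 : (δ ^ (m+1) * δ ^ (n+1)) * (δ ^ n * δ ^ m)⁻¹ = δ * δ := by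
        rw [← zpow_add, ← zpow_add, ← zpow_neg, ← zpow_add]
        have he : (m + 1 + (n + 1) + -(n + m)) = 2 := by ring
        rw [he, zpow_two]
      have h5 : a * b * (b * a)⁻¹ = a * b * a⁻¹ * b⁻¹ := by group
      rw [h5, h4] at h3
      exact absurd (h3.trans hδ2) (lt_irrefl _)
    intro a b
    have h1 := hcomle a b
    have h3 : 1 ≤ a * b * a⁻¹ * b⁻¹ := by
      have he : (b * a * b⁻¹ * a⁻¹)⁻¹ = a * b * a⁻¹ * b⁻¹ := by group
      rw [← he]
      exact one_le_inv'.mpr (hcomle b a)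
    have h4 : a * b * a⁻¹ = b := mul_inv_eq_one.mp (le_antisymm h1 h3)
    exact mul_inv_eq_iff_eq_mul.mp h4

section Holder

/-- Hölder embedding for a (now commutative) archimedean linearly ordered group -/
theorem holder {G : Type*} [CommGroup G] [LinearOrder G] [IsOrderedMonoid G]
    (harch : ∀ a b : G, 1 < b → ∃ n : ℕ, a < b ^ n)
    {b : G} (hb : 1 < b) :
    ∃ f : G → ℝ, (∀ a c : G, f (a * c) = f a + f c) ∧ (∀ a c : G, a ≤ c ↔ f a ≤ f c) := by
  have hinv : ∀ a c d : G, a ≤ c → d * a ≤ d * c := fun a c d h => mul_le_mul_right h d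
  choose q hq1 hq2 using fun x : G => bracket hinv harch hb x
  have hmono : StrictMono fun m : ℤ => b ^ m := by
    intro m n h
    have hpos : (0:ℤ) < n - m := sub_pos.mpr h
    have h1 : (1 : G) < b ^ (n - m) := by
      rw [← Int.toNat_of_nonneg hpos.le, zpow_natCast]
      exact one_lt_pow' hb (by omega)
    calc b ^ m = b ^ m * 1 := (mul_one _).symm
      _ < b ^ m * b ^ (n - m) := mul_lt_mul_right h1 _
      _ = b ^ n := by rw [← zpow_add]; ring_nf
  have hqmax : ∀ (x : G) (p : ℤ), b ^ p ≤ x → p ≤ q x := by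
    intro x p hp
    have h1 : b ^ p < b ^ (q x + 1) := lt_of_le_of_lt hp (hq2 x)
    have := hmono.lt_iff_lt.mp h1
    omega
  have hq1' : q 1 = 0 := by
    have h0 : (0:ℤ) ≤ q 1 := hqmax 1 0 (by simp)
    have h1 : q 1 < 1 := by
      have h2 : b ^ (q 1) < b ^ (1:ℤ) := lt_of_le_of_lt (hq1 1) (by simpa using hb)
      exact hmono.lt_iff_lt.mp h2
    omega
  have hsuper : ∀ (g : G) (m n : ℕ), q (g ^ m) + q (g ^ n) ≤ q (g ^ (m + n)) := by
    intro g m n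
    apply hqmax
    rw [zpow_add, pow_add]
    exact mul_le_mul' (hq1 _) (hq1 _)
  have hQub : ∀ (g : G) (n : ℕ), q (g ^ n) ≤ (q g + 1) * n := by
    intro g n
    have h1 : g ^ n ≤ (b ^ (q g + 1)) ^ n := pow_le_pow_left' (hq2 g).le n
    rw [← zpow_natCast (b ^ (q g + 1)), ← zpow_mul] at h1
    exact hmono.le_iff_le.mp (le_trans (hq1 _) h1)
  set u : G → ℕ → ℝ := fun g n => -((q (g ^ n) : ℤ) : ℝ) with hu
  have husub : ∀ g, Subadditive (u g) := by
    intro g m n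
    have h1 : ((q (g ^ m) : ℤ) : ℝ) + ((q (g ^ n) : ℤ) : ℝ) ≤ ((q (g ^ (m + n)) : ℤ) : ℝ) := by
      exact_mod_cast hsuper g m n
    simp only [hu]
    linarith
  have hbdd : ∀ g, BddBelow (Set.range fun n : ℕ => u g n / n) := by
    intro g
    refine ⟨min (-((q g + 1 : ℤ) : ℝ)) 0, ?_⟩
    rintro _ ⟨n, rfl⟩
    rcases Nat.eq_zero_or_pos n with rfl | hn
    · simp [hu]
    · refine le_trans (min_le_left _ _) ?_
      rw [le_div_iff₀ (by exact_mod_cast hn : (0:ℝ) < n)]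
      have h1 : ((q (g ^ n) : ℤ) : ℝ) ≤ ((q g + 1 : ℤ) : ℝ) * n := by
        exact_mod_cast hQub g n
      simp only [hu]
      nlinarith
  set f : G → ℝ := fun g => -(husub g).lim with hf
  have htends : ∀ g, Tendsto (fun n : ℕ => ((q (g ^ n) : ℤ) : ℝ) / n) atTop (𝓝 (f g)) := by
    intro g
    have h1 := ((husub g).tendsto_lim (hbdd g)).neg
    have he : (fun n : ℕ => -(u g n / n)) = fun n : ℕ => ((q (g ^ n) : ℤ) : ℝ) / n := by
      funext n
      simp [hu, neg_div]
    rw [he] at h1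
    exact h1
  have hdiv : ∀ (A B : ℝ) (n : ℕ), A ≤ B → A / n ≤ B / n := fun A B n h =>
    div_le_div_of_nonneg_right h (Nat.cast_nonneg n)
  have hf1 : f 1 = 0 := by
    have h0 : Tendsto (fun n : ℕ => ((q ((1:G) ^ n) : ℤ) : ℝ) / n) atTop (𝓝 0) := by
      have he : (fun n : ℕ => ((q ((1:G) ^ n) : ℤ) : ℝ) / n) = fun _ => (0:ℝ) := by
        funext n
        simp [one_pow, hq1']
      rw [he]
      exact tendsto_const_nhds
    exact tendsto_nhds_unique (htends 1) h0
  have hadd : ∀ g h : G, f (g * h) = f g + f h := by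
    intro g h
    have hlow : ∀ n : ℕ, q (g ^ n) + q (h ^ n) ≤ q ((g * h) ^ n) := by
      intro n
      apply hqmax
      rw [zpow_add, mul_pow]
      exact mul_le_mul' (hq1 _) (hq1 _)
    have hup : ∀ n : ℕ, q ((g * h) ^ n) ≤ q (g ^ n) + q (h ^ n) + 1 := by
      intro n
      have h1 : (g * h) ^ n < b ^ (q (g ^ n) + 1) * b ^ (q (h ^ n) + 1) := by
        rw [mul_pow]
        exact mul_lt_mul_of_lt_of_lt (hq2 _) (hq2 _)
      rw [← zpow_add] at h1
      have h2 := hmono.lt_iff_lt.mp (lt_of_le_of_lt (hq1 ((g * h) ^ n)) h1)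
      omega
    have hA : Tendsto (fun n : ℕ => ((q (g ^ n) : ℤ) : ℝ) / n + ((q (h ^ n) : ℤ) : ℝ) / n)
        atTop (𝓝 (f g + f h)) := (htends g).add (htends h)
    have hB : Tendsto (fun n : ℕ => ((q (g ^ n) : ℤ) : ℝ) / n + ((q (h ^ n) : ℤ) : ℝ) / n + 1 / n)
        atTop (𝓝 (f g + f h)) := by
      have := hA.add tendsto_one_div_atTop_nhds_zero_nat
      simpa using this
    have hC : Tendsto (fun n : ℕ => ((q ((g * h) ^ n) : ℤ) : ℝ) / n) atTop (𝓝 (f g + f h)) := by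
      refine tendsto_of_tendsto_of_tendsto_of_le_of_le hA hB ?_ ?_
      · intro n
        dsimp only
        rw [← add_div]
        refine hdiv _ _ n ?_
        exact_mod_cast hlow n
      · intro n
        dsimp only
        rw [← add_div, ← add_div]
        refine hdiv _ _ n ?_
        exact_mod_cast hup n
    exact tendsto_nhds_unique (htends (g * h)) hC
  have hmonof : ∀ g h : G, g ≤ h → f g ≤ f h := by
    intro g h hle
    refine le_of_tendsto_of_tendsto' (htends g) (htends h) fun n => ?_
    refine hdiv _ _ n ?_
    have h1 : q (g ^ n) ≤ q (h ^ n) :=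
      hqmax _ _ (le_trans (hq1 _) (pow_le_pow_left' hle n))
    exact_mod_cast h1
  have hpos : ∀ c : G, 1 < c → 0 < f c := by
    intro c hc
    obtain ⟨n, hn⟩ := harch b c hc
    have hn0 : 0 < n := by
      rcases Nat.eq_zero_or_pos n with rfl | h
      · rw [pow_zero] at hn
        exact absurd (hb.trans hn) (lt_irrefl _)
      · exact h
    have hq1n : 1 ≤ q (c ^ n) := hqmax _ 1 (by rw [zpow_one]; exact hn.le)
    have hk : ∀ k : ℕ, (k : ℤ) ≤ q (c ^ (k * n)) := by
      intro k
      induction k with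
      | zero => simp [hq1']
      | succ k ih =>
        have h1 := hsuper c (k * n) n
        have he : (k + 1) * n = k * n + n := by ring
        rw [he]
        push_cast
        omega
    have hcomp : Tendsto (fun k : ℕ => ((q (c ^ (k * n)) : ℤ) : ℝ) / ((k * n : ℕ) : ℝ))
        atTop (𝓝 (f c)) := by
      have hmn : Tendsto (fun k : ℕ => k * n) atTop atTop :=
        tendsto_atTop_mono (fun k => Nat.le_mul_of_pos_right k hn0) tendsto_id
      exact (htends c).comp hmn
    have hge : 1 / (n : ℝ) ≤ f c := by
      refine ge_of_tendsto hcomp ?_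
      filter_upwards [eventually_ge_atTop 1] with k hk1
      have hkq : (k : ℝ) ≤ ((q (c ^ (k * n)) : ℤ) : ℝ) := by exact_mod_cast hk k
      have hposn : (0:ℝ) < (n : ℝ) := by exact_mod_cast hn0
      have hposkn : (0:ℝ) < ((k * n : ℕ) : ℝ) := by
        exact_mod_cast Nat.mul_pos hk1 hn0
      rw [div_le_div_iff₀ hposn hposkn]
      push_cast
      have hkpos : (1:ℝ) ≤ (k:ℝ) := by exact_mod_cast hk1
      nlinarith
    calc (0:ℝ) < 1 / (n:ℝ) := by positivity
      _ ≤ f c := hge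
  refine ⟨f, hadd, fun a c => ⟨hmonof a c, ?_⟩⟩
  intro hle
  by_contra hcon
  push_neg at hcon
  have h1 : 1 < c⁻¹ * a := by
    have := mul_lt_mul_right hcon c⁻¹
    rwa [inv_mul_cancel] at this
  have h2 : 0 < f (c⁻¹ * a) := hpos _ h1
  have h4 : f c⁻¹ + f c = 0 := by rw [← hadd, inv_mul_cancel, hf1]
  rw [hadd] at h2
  have h5 : f c⁻¹ = -f c := by linarith
  rw [h5] at h2
  linarith

end Holder

end Stmt3Aux

/-- Every archimedean left-ordered group is order-isomorphic to a subgroup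
of the naturally ordered additive reals; in particular it is commutative. -/
theorem stmt3 {G : Type*} [Group G] [LinearOrder G]
    (hinv : ∀ a b c : G, a ≤ b → c * a ≤ c * b)
    (harch : ∀ a b : G, 1 < b → ∃ n : ℕ, a < b ^ n) :
    (∃ f : G → ℝ, (∀ a b : G, f (a * b) = f a + f b) ∧ (∀ a b : G, a ≤ b ↔ f a ≤ f b)) ∧
    (∀ a b : G, a * b = b * a) := by
  have hcomm : ∀ a b : G, a * b = b * a := Stmt3Aux.comm hinv harch
  refine ⟨?_, hcomm⟩
  by_cases hex : ∃ g : G, 1 < g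
  · obtain ⟨b0, hb0⟩ := hex
    letI instCG : CommGroup G := { ‹Group G› with mul_comm := hcomm }
    haveI instLOCG : IsOrderedMonoid G :=
      { mul_le_mul_left := fun a b h c => by rw [hcomm a c, hcomm b c]; exact hinv a b c h }
    exact Stmt3Aux.holder harch hb0
  · push_neg at hex
    have htriv : ∀ g : G, g = 1 := by
      intro g
      refine le_antisymm (hex g) ?_
      by_contra hc
      push_neg at hc
      have h3 : g⁻¹ * g < g⁻¹ * 1 := Stmt3Aux.ltMul hinv _ hc
      rw [inv_mul_cancel, mul_one] at h3
      exact absurd h3 (not_lt_of_ge (hex g⁻¹))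
    refine ⟨fun _ => 0, fun a b => by ring, fun a b => ?_⟩
    rw [htriv a, htriv b]
    simp
end

section
/- Let G be a group with left-order ≤. The following are equivalent: (1) for all a, b ∈ G with e < a, b there exists n ∈ ℕ with ab < (ba)ⁿ; (2) for all a, b ∈ G with e < a, b there exists n ∈ ℕ with a < b·aⁿ. -/
/-- For a left-ordered group the two Conrad conditions
`∀ 1 < a, b, ∃ n, ab < (ba)ⁿ` and `∀ 1 < a, b, ∃ n, a < b·aⁿ` are equivalent. -/
theorem stmt5 {G : Type*} [Group G] [LinearOrder G]
    (hinv : ∀ a b c : G, a ≤ b → c * a ≤ c * b) :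
    (∀ a b : G, 1 < a → 1 < b → ∃ n : ℕ, a * b < (b * a) ^ n) ↔
    (∀ a b : G, 1 < a → 1 < b → ∃ n : ℕ, a < b * a ^ n) := by
  -- strict left-invariance
  have hlt : ∀ a b c : G, a < b → c * a < c * b := by
    intro a b c hab
    rcases lt_or_ge (c * a) (c * b) with h | h
    · exact h
    · exfalso
      have := hinv (c * b) (c * a) c⁻¹ h
      simp only [inv_mul_cancel_left] at this
      exact absurd hab (not_lt.mpr this)
  constructor
  · intro h1 a b ha hb
    rcases le_or_gt a b with hab | hab
    · refine ⟨1, ?_⟩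
      have : b * 1 < b * a := hlt 1 a b ha
      rw [mul_one] at this
      calc a ≤ b := hab
        _ < b * a := this
        _ = b * a ^ 1 := by rw [pow_one]
    · -- b < a; apply (1) to x = b⁻¹ * a and b
      have hx : (1 : G) < b⁻¹ * a := by
        have := hlt b a b⁻¹ hab
        rwa [inv_mul_cancel] at this
      obtain ⟨n, hn⟩ := h1 (b⁻¹ * a) b hx hb
      have hba : b * (b⁻¹ * a) = a := by group
      rw [hba] at hn
      -- hn : b⁻¹ * a * b < a ^ n
      have h2 : b * (b⁻¹ * a * b) < b * a ^ n := hlt _ _ b hn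
      have h3 : b * (b⁻¹ * a * b) = a * b := by group
      rw [h3] at h2
      have h4 : a * 1 < a * b := hlt 1 b a hb
      rw [mul_one] at h4
      exact ⟨n, h4.trans h2⟩
  · intro h2 a b ha hb
    set c := a * b with hc
    have hc1 : (1 : G) < c := by
      have h4 : a * 1 < a * b := hlt 1 b a hb
      rw [mul_one] at h4
      exact ha.trans h4
    obtain ⟨m, hm⟩ := h2 c b hc1 hb
    -- hm : c < b * c ^ m
    have key : ∀ k : ℕ, (b * a) ^ (k + 1) = b * (a * b) ^ k * a := by
      intro k
      induction k with
      | zero => group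
      | succ k ih =>
        rw [pow_succ, ih]
        rw [pow_succ]
        group
    refine ⟨m + 1, ?_⟩
    rw [key m]
    have h5 : b * c ^ m * 1 < b * c ^ m * a := hlt 1 a (b * c ^ m) ha
    rw [mul_one] at h5
    calc a * b = c := hc.symm
      _ < b * c ^ m := hm
      _ < b * c ^ m * a := h5
      _ = b * (a * b) ^ m * a := by rw [hc]
end

section
/- Let G be a group with left-order ≤. If for all a, b ∈ G with e < a, b there exists n ∈ ℕ with ab < (ba)ⁿ, then for all a, b ∈ G with e < a < b there exists n ∈ ℕ with b < a⁻¹bⁿa. -/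
theorem inv_conj_pow {G : Type*} [Group G] (a b : G) (n : ℕ) :
    (a⁻¹ * b * a) ^ n = a⁻¹ * b ^ n * a := by
  simpa using conj_pow (a := a⁻¹) (b := b) (i := n)

/-- If a left-order satisfies `∀ 1 < a, b, ∃ n, ab < (ba)ⁿ`, then for all
`1 < a < b` there is `n` with `b < a⁻¹bⁿa`. -/
theorem stmt6 {G : Type*} [Group G] [LinearOrder G]
    (hinv : ∀ a b c : G, a ≤ b → c * a ≤ c * b)
    (hconrad : ∀ a b : G, 1 < a → 1 < b → ∃ n : ℕ, a * b < (b * a) ^ n) :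
    ∀ a b : G, 1 < a → a < b → ∃ n : ℕ, b < a⁻¹ * b ^ n * a := by
  have : MulLeftMono G := ⟨fun c _ _ h => hinv _ _ c h⟩
  intro a b ha hab
  obtain ⟨n, hn⟩ := hconrad a (a⁻¹ * b) ha (lt_inv_mul_iff_lt.mpr hab)
  refine ⟨n, ?_⟩
  rwa [mul_inv_cancel_left, inv_conj_pow] at hn
end

section
/- Let G be a group with Conradian left-order ≤, let U be a subgroup of G, and let (C', C) be a convex jump in U with respect to the induced order. Then there exists a convex jump (C̄', C̄) in G such that C̄' ∩ U = C' and C̄ ∩ U = C. -/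
/-!
Choose `g > 1` in `C \ C'`. In `G`, the smallest convex subgroup containing `g` and the largest
convex subgroup avoiding `g` always form a convex jump, because convex subgroups of a
left-ordered group form a chain. In a Conradian group the elements `x` with `x ≤ g ^ n` and
`x⁻¹ ≤ g ^ m` form a convex subgroup, so the trace on `U` of the smallest convex subgroup
containing `g` lies in `C`, and each `x ∈ C'` lies in a convex subgroup of `G` avoiding `g`,
namely the one spanned by `|x|ₘ`. The two traces on `U` are then convex subgroups squeezed
between `C'` and `C`, separated by `g`, so they must be `C'` and `C`.
-/

/-- A subgroup of a left-ordered group is convex if `a ≤ b ≤ c` with `a, c` in the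
subgroup forces `b` into the subgroup. -/
def IsConvexSubgroup {H : Type*} [Group H] [LinearOrder H] (C : Subgroup H) : Prop :=
  ∀ a b c : H, a ≤ b → b ≤ c → a ∈ C → c ∈ C → b ∈ C

/-- `(C', C)` is a convex jump: both are convex, `C' ⊊ C`, and no convex subgroup lies
strictly between them. -/
def IsConvexJump {H : Type*} [Group H] [LinearOrder H] (C' C : Subgroup H) : Prop :=
  IsConvexSubgroup C' ∧ IsConvexSubgroup C ∧ C' < C ∧
    ∀ B : Subgroup H, IsConvexSubgroup B → C' ≤ B → B ≤ C → B = C' ∨ B = C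

instance Subgroup.mulLeftMono {G : Type*} [Group G] [LinearOrder G] [MulLeftMono G]
    (U : Subgroup G) : MulLeftMono U :=
  ⟨fun c _ _ h => Subtype.coe_le_coe.mp (mul_le_mul_right (Subtype.coe_le_coe.mpr h) (c : G))⟩

theorem exists_one_lt_mem_notMem {G : Type*} [Group G] [LinearOrder G] [MulLeftMono G]
    {H K : Subgroup G} (h : H < K) : ∃ g ∈ K, g ∉ H ∧ 1 < g := by
  obtain ⟨x, hxK, hxH⟩ := SetLike.exists_of_lt h
  have hx : x ≠ 1 := fun hx => hxH (hx ▸ H.one_mem)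
  exact ⟨|x|ₘ, mabs_mem_iff.mpr hxK, mabs_mem_iff.not.mpr hxH, one_lt_mabs.mpr hx⟩

namespace IsConvexSubgroup

variable {G : Type*} [Group G] [LinearOrder G]

theorem bot : IsConvexSubgroup (⊥ : Subgroup G) := by
  intro a b c hab hbc ha hc
  rw [Subgroup.mem_bot] at ha hc ⊢
  subst ha hc
  exact le_antisymm hbc hab

theorem sInf {S : Set (Subgroup G)} (hS : ∀ K ∈ S, IsConvexSubgroup K) :
    IsConvexSubgroup (sInf S) := by
  intro a b c hab hbc ha hc
  rw [Subgroup.mem_sInf] at ha hc ⊢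
  exact fun K hK => hS K hK a b c hab hbc (ha K hK) (hc K hK)

theorem subgroupOf {K : Subgroup G} (hK : IsConvexSubgroup K) (U : Subgroup G) :
    IsConvexSubgroup (K.subgroupOf U) :=
  fun a b c hab hbc ha hc => hK a b c hab hbc ha hc

variable [MulLeftMono G] {K : Subgroup G}

theorem mem_of_le_of_inv_le (hK : IsConvexSubgroup K) {x a b : G} (hxa : x ≤ a)
    (hxb : x⁻¹ ≤ b) (ha : a ∈ K) (hb : b ∈ K) : x ∈ K := by
  rcases le_total 1 x with hx | hx
  · exact hK 1 x a hx hxa K.one_mem ha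
  · exact inv_mem_iff.mp (hK 1 x⁻¹ b (one_le_inv'.mpr hx) hxb K.one_mem hb)

theorem mem_of_mabs_le (hK : IsConvexSubgroup K) {x a : G} (h : |x|ₘ ≤ a) (ha : a ∈ K) :
    x ∈ K :=
  hK.mem_of_le_of_inv_le ((le_mabs_self x).trans h) ((inv_le_mabs x).trans h) ha ha

theorem le_or_le {A B : Subgroup G} (hA : IsConvexSubgroup A) (hB : IsConvexSubgroup B) :
    A ≤ B ∨ B ≤ A := by
  refine or_iff_not_imp_left.mpr fun hAB b hb => ?_
  obtain ⟨a, haA, haB⟩ := SetLike.not_le_iff_exists.mp hAB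
  rcases le_total |a|ₘ |b|ₘ with h | h
  · exact absurd (hB.mem_of_mabs_le h (mabs_mem_iff.mpr hb)) haB
  · exact hA.mem_of_mabs_le h (mabs_mem_iff.mpr haA)

theorem directedOn {S : Set (Subgroup G)} (hS : ∀ K ∈ S, IsConvexSubgroup K) :
    DirectedOn (· ≤ ·) S :=
  IsChain.directedOn fun A hA B hB _ => (hS A hA).le_or_le (hS B hB)

theorem sSup {S : Set (Subgroup G)} (hS : ∀ K ∈ S, IsConvexSubgroup K) (hne : S.Nonempty) :
    IsConvexSubgroup (sSup S) := by
  intro a b c hab hbc ha hc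
  rw [Subgroup.mem_sSup_of_directedOn hne (directedOn hS)] at ha hc ⊢
  obtain ⟨A, hA, haA⟩ := ha
  obtain ⟨B, hB, hcB⟩ := hc
  rcases (hS A hA).le_or_le (hS B hB) with hAB | hBA
  · exact ⟨B, hB, hS B hB a b c hab hbc (hAB haA) hcB⟩
  · exact ⟨A, hA, hS A hA a b c hab hbc haA (hBA hcB)⟩

end IsConvexSubgroup

section ConvexSpan

variable {G : Type*} [Group G] [LinearOrder G]

def convexSpan (g : G) : Subgroup G := sInf {K | IsConvexSubgroup K ∧ g ∈ K}

def maxConvexNotMem (g : G) : Subgroup G := sSup {K | IsConvexSubgroup K ∧ g ∉ K}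

theorem isConvexSubgroup_convexSpan (g : G) : IsConvexSubgroup (convexSpan g) :=
  IsConvexSubgroup.sInf fun _ hK => hK.1

theorem mem_convexSpan_self (g : G) : g ∈ convexSpan g :=
  Subgroup.mem_sInf.mpr fun _ hK => hK.2

theorem convexSpan_le {g : G} {K : Subgroup G} (hK : IsConvexSubgroup K) (hg : g ∈ K) :
    convexSpan g ≤ K :=
  sInf_le ⟨hK, hg⟩

theorem le_maxConvexNotMem {g : G} {K : Subgroup G} (hK : IsConvexSubgroup K) (hg : g ∉ K) :
    K ≤ maxConvexNotMem g :=
  le_sSup ⟨hK, hg⟩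

theorem nonempty_convex_notMem {g : G} (hg : g ≠ 1) :
    {K : Subgroup G | IsConvexSubgroup K ∧ g ∉ K}.Nonempty :=
  ⟨⊥, IsConvexSubgroup.bot, Subgroup.mem_bot.not.mpr hg⟩

variable [MulLeftMono G] {g : G}

theorem isConvexSubgroup_maxConvexNotMem (hg : g ≠ 1) : IsConvexSubgroup (maxConvexNotMem g) :=
  IsConvexSubgroup.sSup (fun _ hK => hK.1) (nonempty_convex_notMem hg)

theorem notMem_maxConvexNotMem (hg : g ≠ 1) : g ∉ maxConvexNotMem g := by
  rw [maxConvexNotMem, Subgroup.mem_sSup_of_directedOn (nonempty_convex_notMem hg)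
    (IsConvexSubgroup.directedOn fun _ hK => hK.1)]
  rintro ⟨K, ⟨-, hgK⟩, hg⟩
  exact hgK hg

theorem isConvexJump_maxConvexNotMem_convexSpan (hg : g ≠ 1) :
    IsConvexJump (maxConvexNotMem g) (convexSpan g) := by
  have hmax := isConvexSubgroup_maxConvexNotMem hg
  have hspan := isConvexSubgroup_convexSpan g
  have hle : maxConvexNotMem g ≤ convexSpan g :=
    (hmax.le_or_le hspan).resolve_right fun h =>
      notMem_maxConvexNotMem hg (h (mem_convexSpan_self g))
  refine ⟨hmax, hspan, SetLike.lt_iff_le_and_exists.mpr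
    ⟨hle, g, mem_convexSpan_self g, notMem_maxConvexNotMem hg⟩, fun B hB hmaxB hBspan => ?_⟩
  by_cases hgB : g ∈ B
  · exact Or.inr (hBspan.antisymm (convexSpan_le hB hgB))
  · exact Or.inl ((le_maxConvexNotMem hB hgB).antisymm hmaxB)

end ConvexSpan

def IsConradian (G : Type*) [Group G] [LT G] : Prop :=
  ∀ a b : G, 1 < a → 1 < b → ∃ n : ℕ, a * b < (b * a) ^ n

namespace IsConradian

variable {G : Type*} [Group G] [LinearOrder G] [MulLeftMono G] {g : G}

theorem exists_le_mul_pow (hG : IsConradian G) (hg : 1 < g) {t : G} (ht : 1 ≤ t) :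
    ∃ j : ℕ, g ≤ t * g ^ j := by
  rcases ht.eq_or_lt with rfl | ht
  · exact ⟨1, by simp⟩
  by_contra! h
  -- `(t * g ^ 2) ^ n` stays below `g`, while the Conradian inequality puts `g ^ 2 * t` below it.
  have hpow : ∀ n : ℕ, (t * g ^ 2) ^ n ≤ g := by
    intro n
    induction n with
    | zero => simpa using hg.le
    | succ n ih =>
      calc (t * g ^ 2) ^ (n + 1) = t * g ^ 2 * (t * g ^ 2) ^ n := pow_succ' _ _
        _ ≤ t * g ^ 2 * g := mul_le_mul_right ih _
        _ = t * g ^ 3 := by group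
        _ ≤ g := (h 3).le
  obtain ⟨n, hn⟩ := hG (g ^ 2) t (one_lt_pow' hg two_ne_zero) ht
  have hgt : g * (g * t) < g := by
    simpa only [pow_two, mul_assoc] using hn.trans_le (hpow n)
  exact (one_lt_mul' hg ht).not_gt (mul_lt_iff_lt_one_left'.mp hgt)

theorem exists_mul_le_pow (hG : IsConradian G) (hg : 1 < g) {y : G} {m : ℕ} (hy : y ≤ g ^ m) :
    ∃ q : ℕ, y * g ≤ g ^ q := by
  have hy' : 1 ≤ y⁻¹ * g ^ m := le_inv_mul_iff_mul_le.mpr ((mul_one y).trans_le hy)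
  obtain ⟨j, hj⟩ := hG.exists_le_mul_pow hg hy'
  refine ⟨m + j, ?_⟩
  rw [pow_add]
  exact le_inv_mul_iff_mul_le.mp (by rwa [mul_assoc] at hj)

theorem exists_mul_pow_le_pow (hG : IsConradian G) (hg : 1 < g) {y : G} {m : ℕ}
    (hy : y ≤ g ^ m) (k : ℕ) :
    ∃ q : ℕ, y * g ^ k ≤ g ^ q := by
  induction k with
  | zero => exact ⟨m, by simpa using hy⟩
  | succ k ih =>
    obtain ⟨q, hq⟩ := ih
    simpa only [pow_succ, ← mul_assoc] using hG.exists_mul_le_pow hg hq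

def powBoundedSubgroup (hG : IsConradian G) (hg : 1 < g) : Subgroup G where
  carrier := {x | (∃ n : ℕ, x ≤ g ^ n) ∧ ∃ n : ℕ, x⁻¹ ≤ g ^ n}
  one_mem' := ⟨⟨0, by simp⟩, ⟨0, by simp⟩⟩
  inv_mem' := fun ⟨hx, hx'⟩ => ⟨hx', by simpa only [inv_inv] using hx⟩
  mul_mem' := by
    rintro x y ⟨⟨a, hxa⟩, ⟨a', hxa'⟩⟩ ⟨⟨b, hyb⟩, ⟨b', hyb'⟩⟩
    obtain ⟨q, hq⟩ := hG.exists_mul_pow_le_pow hg hxa b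
    obtain ⟨q', hq'⟩ := hG.exists_mul_pow_le_pow hg hyb' a'
    refine ⟨⟨q, (mul_le_mul_right hyb x).trans hq⟩, ⟨q', ?_⟩⟩
    rw [mul_inv_rev]
    exact (mul_le_mul_right hxa' _).trans hq'

theorem isConvexSubgroup_powBoundedSubgroup (hG : IsConradian G) (hg : 1 < g) :
    IsConvexSubgroup (hG.powBoundedSubgroup hg) := by
  rintro a b c hab hbc ⟨-, s, hs⟩ ⟨⟨n, hn⟩, -⟩
  refine ⟨⟨n, hbc.trans hn⟩, ?_⟩
  have hba : b⁻¹ * a ≤ g ^ 0 := inv_mul_le_iff_le_mul.mpr (by simpa using hab)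
  obtain ⟨q, hq⟩ := hG.exists_mul_pow_le_pow hg hba s
  refine ⟨q, le_trans ?_ hq⟩
  simpa [mul_assoc] using mul_le_mul_right hs (b⁻¹ * a)

theorem le_pow_of_mem_convexSpan (hG : IsConradian G) (hg : 1 < g) {x : G}
    (hx : x ∈ convexSpan g) :
    (∃ n : ℕ, x ≤ g ^ n) ∧ ∃ n : ℕ, x⁻¹ ≤ g ^ n :=
  convexSpan_le (hG.isConvexSubgroup_powBoundedSubgroup hg)
    (show g ∈ hG.powBoundedSubgroup hg from ⟨⟨1, by simp⟩, ⟨0, by simpa using hg.le⟩⟩)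
    hx

variable {U : Subgroup G} {D : Subgroup U}

theorem convexSpan_subgroupOf_le (hG : IsConradian G) (hD : IsConvexSubgroup D) {g : U}
    (hg : 1 < g) (hgD : g ∈ D) :
    (convexSpan (g : G)).subgroupOf U ≤ D := by
  intro x hx
  obtain ⟨⟨n, hn⟩, ⟨m, hm⟩⟩ := hG.le_pow_of_mem_convexSpan (by exact_mod_cast hg) hx
  exact hD.mem_of_le_of_inv_le (a := g ^ n) (b := g ^ m) (by exact_mod_cast hn)
    (by exact_mod_cast hm) (pow_mem hgD n) (pow_mem hgD m)

theorem le_maxConvexNotMem_subgroupOf (hG : IsConradian G) (hD : IsConvexSubgroup D) {g : U}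
    (hgD : g ∉ D) :
    D ≤ (maxConvexNotMem (g : G)).subgroupOf U := by
  intro x hx
  rcases eq_or_ne x 1 with rfl | hx1
  · exact one_mem _
  have hg : (g : G) ∉ convexSpan (|x|ₘ : G) := fun h =>
    hgD (hG.convexSpan_subgroupOf_le hD (one_lt_mabs.mpr hx1) (mabs_mem_iff.mpr hx) h)
  exact mabs_mem_iff.mp
    (le_maxConvexNotMem (isConvexSubgroup_convexSpan _) hg (mem_convexSpan_self _))

end IsConradian

/-- A convex jump `(C', C)` of a subgroup `U` of a Conradian left-ordered
group `G` extends to a convex jump `(C̄', C̄)` of `G` with `C̄' ∩ U = C'`, `C̄ ∩ U = C`. -/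
theorem stmt8 {G : Type*} [Group G] [LinearOrder G]
    (hinv : ∀ a b c : G, a ≤ b → c * a ≤ c * b)
    (hconrad : ∀ a b : G, 1 < a → 1 < b → ∃ n : ℕ, a * b < (b * a) ^ n)
    (U : Subgroup G) (C' C : Subgroup ↥U) (hjump : IsConvexJump C' C) :
    ∃ Cb' Cb : Subgroup G, IsConvexJump Cb' Cb ∧
      Cb'.subgroupOf U = C' ∧ Cb.subgroupOf U = C := by
  have : MulLeftMono G := ⟨fun c a b h => hinv a b c h⟩
  have hG : IsConradian G := hconrad
  obtain ⟨hC', hC, hlt, hmin⟩ := hjump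
  obtain ⟨g, hgC, hgC', hg⟩ := exists_one_lt_mem_notMem hlt
  have hg1 : (g : G) ≠ 1 := by exact_mod_cast hg.ne'
  obtain ⟨hmaxConv, hspanConv, hmaxSpan, -⟩ := isConvexJump_maxConvexNotMem_convexSpan hg1
  have hC'max := hG.le_maxConvexNotMem_subgroupOf hC' hgC'
  have hspan : (convexSpan (g : G)).subgroupOf U = C :=
    (hmin _ (hspanConv.subgroupOf U) (hC'max.trans (Subgroup.subgroupOf_mono U hmaxSpan.le))
      (hG.convexSpan_subgroupOf_le hC hg hgC)).resolve_left
      fun h => hgC' (h ▸ mem_convexSpan_self (g : G))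
  have hmax : (maxConvexNotMem (g : G)).subgroupOf U = C' :=
    (hmin _ (hmaxConv.subgroupOf U) hC'max
      ((Subgroup.subgroupOf_mono U hmaxSpan.le).trans hspan.le)).resolve_right
      fun h => notMem_maxConvexNotMem hg1 (Subgroup.mem_subgroupOf.mp (h ▸ hgC))
  exact ⟨_, _, isConvexJump_maxConvexNotMem_convexSpan hg1, hmax, hspan⟩
end

section
/- Every torsion-free divisible abelian group G possesses a linear group order ≤ such that every factor C/C' of a convex jump is order-isomorphic to a subgroup of the additive rationals, and the set of convex subgroups is well-ordered by inclusion. -/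
/-- Convexity of an additive subgroup with respect to an abstract order relation `r`. -/
def IsConvexRel {G : Type*} [AddGroup G] (r : G → G → Prop) (C : AddSubgroup G) : Prop :=
  ∀ a b c : G, r a b → r b c → a ∈ C → c ∈ C → b ∈ C

namespace Stmt11Aux

variable {G : Type*} [AddCommGroup G]

theorem cancel (htf : ∀ n : ℤ, n ≠ 0 → ∀ g : G, n • g = 0 → g = 0)
    {n : ℤ} (hn : n ≠ 0) {a b : G} (h : n • a = n • b) : a = b :=
  sub_eq_zero.mp (htf n hn (a - b) (by rw [smul_sub, h, sub_self]))

theorem num_eq (q : ℚ) : (q.num : ℚ) = q * (q.den : ℚ) := by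
  have h := Rat.num_div_den q
  have hden : (q.den : ℚ) ≠ 0 := by exact_mod_cast q.den_ne_zero
  exact (div_eq_iff hden).mp h

variable (htf : ∀ n : ℤ, n ≠ 0 → ∀ g : G, n • g = 0 → g = 0)
    (hdiv : ∀ n : ℤ, n ≠ 0 → ∀ g : G, ∃ h : G, n • h = g)

noncomputable def rsmul (q : ℚ) (x : G) : G :=
  Classical.choose (hdiv (q.den : ℤ) (by exact_mod_cast q.den_ne_zero) (q.num • x))

theorem rsmul_den (q : ℚ) (x : G) : (q.den : ℤ) • rsmul hdiv q x = q.num • x :=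
  Classical.choose_spec (hdiv (q.den : ℤ) (by exact_mod_cast q.den_ne_zero) (q.num • x))

include htf in
theorem rsmul_spec (q : ℚ) (m n : ℤ) (hn : n ≠ 0) (h : (m : ℚ) = q * n) (x : G) :
    n • rsmul hdiv q x = m • x := by
  have hden : (q.den : ℤ) ≠ 0 := by exact_mod_cast q.den_ne_zero
  have hcross : m * (q.den : ℤ) = q.num * n := by
    have : (m : ℚ) * (q.den : ℚ) = (q.num : ℚ) * (n : ℚ) := by
      rw [h, num_eq]; ring
    exact_mod_cast this
  apply cancel htf hden
  rw [smul_comm ((q.den : ℤ)) n, rsmul_den hdiv, smul_smul, smul_smul, mul_comm n q.num,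
    ← hcross, mul_comm m (q.den : ℤ), mul_smul]

noncomputable def ratModule : Module ℚ G :=
  letI : SMul ℚ G := ⟨rsmul hdiv⟩
  have dq : ∀ q : ℚ, ((q.den : ℤ)) ≠ 0 := fun q => by exact_mod_cast q.den_ne_zero
  have key : ∀ (q : ℚ) (m n : ℤ), n ≠ 0 → (m : ℚ) = q * n → ∀ x : G, n • (q • x) = m • x :=
    fun q m n hn h x => rsmul_spec htf hdiv q m n hn h x
  have keyden : ∀ (q : ℚ) (x : G), (q.den : ℤ) • (q • x) = q.num • x :=
    fun q x => key q q.num (q.den : ℤ) (dq q) (by push_cast [num_eq q]; ring) x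
  { smul := fun q x => q • x
    one_smul := fun x => by
      have := key 1 1 1 one_ne_zero (by norm_num) x
      simpa using this
    mul_smul := fun q p x => by
      have hN : (q.den : ℤ) * (p.den : ℤ) ≠ 0 := mul_ne_zero (dq q) (dq p)
      apply cancel htf hN
      have h1 : ((q.den : ℤ) * (p.den : ℤ)) • ((q * p) • x) = (q.num * p.num) • x :=
        key (q * p) (q.num * p.num) _ hN (by push_cast [num_eq q, num_eq p]; ring) x
      have h2 : ((q.den : ℤ) * (p.den : ℤ)) • (q • (p • x)) = (q.num * p.num) • x := by
        have ha : ((q.den : ℤ) * (p.den : ℤ)) • (q • (p • x)) = (q.num * (p.den : ℤ)) • (p • x) :=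
          key q (q.num * (p.den : ℤ)) _ hN (by push_cast [num_eq q]; ring) (p • x)
        rw [ha, mul_smul, keyden p x, smul_smul]
      rw [h1, h2]
    smul_zero := fun q => by
      apply cancel htf (dq q)
      rw [keyden q (0 : G), smul_zero, smul_zero]
    smul_add := fun q x y => by
      apply cancel htf (dq q)
      rw [smul_add, keyden, keyden, keyden, smul_add]
    add_smul := fun q p x => by
      have hN : (q.den : ℤ) * (p.den : ℤ) ≠ 0 := mul_ne_zero (dq q) (dq p)
      apply cancel htf hN
      rw [smul_add,
        key (q + p) (q.num * (p.den : ℤ) + p.num * (q.den : ℤ)) _ hN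
          (by push_cast [num_eq q, num_eq p]; ring) x,
        key q (q.num * (p.den : ℤ)) _ hN (by push_cast [num_eq q]; ring) x,
        key p (p.num * (q.den : ℤ)) _ hN (by push_cast [num_eq p]; ring) x,
        ← add_smul]
    zero_smul := fun x => by
      have := key 0 0 1 one_ne_zero (by norm_num) x
      simpa using this }


end Stmt11Aux

namespace Stmt11Aux

variable {G : Type*} [AddCommGroup G] [Module ℚ G] {ι : Type*} [LinearOrder ι]
variable (bb : Module.Basis ι ℚ G)

/-- positivity: leading coefficient is positive -/
def Pos (x : G) : Prop := ∃ i, 0 < bb.repr x i ∧ ∀ j, i < j → bb.repr x j = 0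

theorem not_pos_and_neg {x : G} (h1 : Pos bb x) (h2 : Pos bb (-x)) : False := by
  obtain ⟨i, hi, hia⟩ := h1
  obtain ⟨j, hj, hja⟩ := h2
  have hj' : bb.repr x j < 0 := by
    have h0 : (0 : ℚ) < -(bb.repr x j) := by simpa using hj
    linarith
  have hja' : ∀ k, j < k → bb.repr x k = 0 := fun k hk => by simpa using hja k hk
  rcases lt_trichotomy i j with h | h | h
  · exact absurd (hia j h) hj'.ne
  · subst h; exact lt_irrefl 0 (hi.trans hj')
  · exact absurd (hja' i h) hi.ne'

theorem pos_trichotomy (x : G) : x = 0 ∨ Pos bb x ∨ Pos bb (-x) := by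
  by_cases hx : x = 0
  · exact Or.inl hx
  right
  have hr : bb.repr x ≠ 0 := fun h => hx (bb.repr.map_eq_zero_iff.mp h)
  have hs : (bb.repr x).support.Nonempty := Finsupp.support_nonempty_iff.mpr hr
  set i := (bb.repr x).support.max' hs with hidef
  have hmem : i ∈ (bb.repr x).support := Finset.max'_mem _ hs
  have hne : bb.repr x i ≠ 0 := Finsupp.mem_support_iff.mp hmem
  have habove : ∀ j, i < j → bb.repr x j = 0 := by
    intro j hj
    by_contra h
    exact absurd (Finset.le_max' _ j (Finsupp.mem_support_iff.mpr h)) (not_le.mpr hj)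
  rcases hne.lt_or_gt with h | h
  · right
    refine ⟨i, ?_, fun j hj => ?_⟩
    · simpa using h
    · simp [habove j hj]
  · exact Or.inl ⟨i, h, habove⟩

theorem pos_add {x y : G} (hx : Pos bb x) (hy : Pos bb y) : Pos bb (x + y) := by
  obtain ⟨i, hi, hia⟩ := hx
  obtain ⟨j, hj, hja⟩ := hy
  rcases lt_trichotomy i j with h | h | h
  · refine ⟨j, ?_, fun k hk => ?_⟩
    · simp [map_add, hia j h, hj]
    · simp [map_add, hia k (h.trans hk), hja k hk]
  · subst h
    refine ⟨i, ?_, fun k hk => ?_⟩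
    · simp only [map_add, Finsupp.add_apply]; positivity
    · simp [map_add, hia k hk, hja k hk]
  · refine ⟨i, ?_, fun k hk => ?_⟩
    · simp [map_add, hja i h, hi]
    · simp [map_add, hia k hk, hja k (h.trans hk)]

theorem pos_smul {q : ℚ} (hq : 0 < q) {x : G} (hx : Pos bb x) : Pos bb (q • x) := by
  obtain ⟨i, hi, hia⟩ := hx
  refine ⟨i, ?_, fun k hk => ?_⟩
  · simp only [map_smul, Finsupp.smul_apply, smul_eq_mul]
    positivity
  · simp [map_smul, hia k hk]

/-- the order relation -/
def rel (a c : G) : Prop := a = c ∨ Pos bb (c - a)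

theorem rel_refl (a : G) : rel bb a a := Or.inl rfl

theorem rel_antisymm {a c : G} (h1 : rel bb a c) (h2 : rel bb c a) : a = c := by
  rcases h1 with h | h
  · exact h
  rcases h2 with h' | h'
  · exact h'.symm
  exact absurd (not_pos_and_neg bb h (by rwa [neg_sub])) (fun h => h)

theorem rel_trans {a c e : G} (h1 : rel bb a c) (h2 : rel bb c e) : rel bb a e := by
  rcases h1 with rfl | h
  · exact h2
  rcases h2 with rfl | h'
  · exact Or.inr h
  right
  have := pos_add bb h' h
  rwa [sub_add_sub_cancel] at this

theorem rel_total (a c : G) : rel bb a c ∨ rel bb c a := by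
  rcases pos_trichotomy bb (c - a) with h | h | h
  · left; left; exact (sub_eq_zero.mp h).symm
  · left; right; exact h
  · right; right; rwa [neg_sub] at h

theorem rel_add {a c : G} (e : G) (h : rel bb a c) : rel bb (e + a) (e + c) := by
  rcases h with rfl | h
  · exact Or.inl rfl
  · right; rwa [add_sub_add_left_eq_sub]

theorem convex_smul (C : AddSubgroup G) (hC : IsConvexRel (rel bb) C)
    {x : G} (hx : x ∈ C) (q : ℚ) : q • x ∈ C := by
  have aux : ∀ y : G, y ∈ C → Pos bb y → ∀ p : ℚ, 0 ≤ p → p • y ∈ C := by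
    intro y hy hP p hp
    set n : ℤ := ⌈p⌉ with hn
    have hpn : p ≤ (n : ℚ) := Int.le_ceil p
    have hnC : n • y ∈ C := AddSubgroup.zsmul_mem C hy n
    have hcast : (n : ℤ) • y = ((n : ℚ)) • y := (Int.cast_smul_eq_zsmul ℚ n y).symm
    refine hC 0 (p • y) (n • y) ?_ ?_ (zero_mem C) hnC
    · rcases hp.lt_or_eq with h | h
      · exact Or.inr (by rw [sub_zero]; exact pos_smul bb h hP)
      · exact Or.inl (by rw [← h, zero_smul])
    · rcases hpn.lt_or_eq with h | h
      · refine Or.inr ?_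
        rw [hcast, ← sub_smul]
        exact pos_smul bb (by linarith) hP
      · exact Or.inl (by rw [hcast, ← h])
  rcases pos_trichotomy bb x with rfl | hP | hN
  · simpa using zero_mem C
  · rcases le_or_gt 0 q with h | h
    · exact aux x hx hP q h
    · have : (-q) • (-x) ∈ C := by
        have := aux x hx hP (-q) (by linarith)
        simpa using this
      simpa using this
  · rcases le_or_gt 0 q with h | h
    · have := aux (-x) (AddSubgroup.neg_mem C hx) hN q h
      have h2 : -(q • (-x)) ∈ C := AddSubgroup.neg_mem C this
      simpa using h2
    · have := aux (-x) (AddSubgroup.neg_mem C hx) hN (-q) (by linarith)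
      simpa using this

theorem convex_mem (C : AddSubgroup G) (hC : IsConvexRel (rel bb) C)
    {x : G} (hxC : x ∈ C) (m : ι) (hm : bb.repr x m ≠ 0)
    (hxa : ∀ k, m < k → bb.repr x k = 0)
    {y : G} (hya : ∀ k, m < k → bb.repr y k = 0) : y ∈ C := by
  set c := bb.repr x m with hc
  set z := c⁻¹ • x with hzdef
  have hzC : z ∈ C := convex_smul bb C hC hxC c⁻¹
  have hz_m : bb.repr z m = 1 := by
    simp [hzdef, map_smul, ← hc, inv_mul_cancel₀ hm]
  have hz_a : ∀ k, m < k → bb.repr z k = 0 := fun k hk => by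
    simp [hzdef, map_smul, hxa k hk]
  set d := bb.repr y m with hd
  set y' := y - d • z with hy'def
  have hy'_m : bb.repr y' m = 0 := by
    simp [hy'def, map_sub, map_smul, hz_m, ← hd]
  have hy'_a : ∀ k, m < k → bb.repr y' k = 0 := fun k hk => by
    simp [hy'def, map_sub, map_smul, hya k hk, hz_a k hk]
  have h1 : Pos bb (z - y') := by
    refine ⟨m, ?_, fun k hk => ?_⟩
    · simp [map_sub, hz_m, hy'_m]
    · simp [map_sub, hz_a k hk, hy'_a k hk]
  have h2 : Pos bb (y' - -z) := by
    rw [sub_neg_eq_add]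
    refine ⟨m, ?_, fun k hk => ?_⟩
    · simp [map_add, hz_m, hy'_m]
    · simp [map_add, hz_a k hk, hy'_a k hk]
  have hy' : y' ∈ C :=
    hC (-z) y' z (Or.inr h2) (Or.inr h1) (AddSubgroup.neg_mem C hzC) hzC
  have hdz : d • z ∈ C := convex_smul bb C hC hzC d
  have : y = y' + d • z := by rw [hy'def]; abel
  rw [this]
  exact AddSubgroup.add_mem C hy' hdz

/-- subgroup of elements vanishing on an upward-closed set of indices -/
def Bup (S : Set ι) : AddSubgroup G where
  carrier := {y | ∀ k ∈ S, bb.repr y k = 0}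
  zero_mem' := by simp
  add_mem' := fun ha hb => fun k hk => by simp [map_add, ha k hk, hb k hk]
  neg_mem' := fun ha => fun k hk => by simp [map_neg, ha k hk]

theorem mem_Bup {S : Set ι} {y : G} : y ∈ Bup bb S ↔ ∀ k ∈ S, bb.repr y k = 0 := Iff.rfl

theorem bup_convex (S : Set ι) (hS : ∀ ⦃k k'⦄, k ∈ S → k ≤ k' → k' ∈ S) :
    IsConvexRel (rel bb) (Bup bb S) := by
  intro a u e hau hue haB heB
  rcases hau with rfl | hP
  · exact haB
  rcases hue with rfl | hQ
  · exact heB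
  obtain ⟨j, hj, hja⟩ := hP
  obtain ⟨j', hj', hja'⟩ := hQ
  have heaB : e - a ∈ Bup bb S := AddSubgroup.sub_mem _ heB haB
  have hsum : bb.repr (e - a) = bb.repr (e - u) + bb.repr (u - a) := by
    rw [← map_add]; congr 1; abel
  have hpt : ∀ k, bb.repr (e - a) k = bb.repr (e - u) k + bb.repr (u - a) k :=
    fun k => by rw [hsum, Finsupp.add_apply]
  have hjS : j ∉ S := by
    intro hjmem
    rcases lt_trichotomy j' j with h | h | h
    · have h0 := hpt j
      rw [heaB j hjmem, hja' j h, zero_add] at h0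
      exact absurd h0.symm hj.ne'
    · subst h
      have h0 := hpt j'
      rw [heaB j' hjmem] at h0
      have : (0:ℚ) < bb.repr (e - u) j' + bb.repr (u - a) j' := by positivity
      linarith
    · have hj'S : j' ∈ S := hS hjmem h.le
      have h0 := hpt j'
      rw [heaB j' hj'S, hja j' h, add_zero] at h0
      exact absurd h0.symm hj'.ne'
  have huaB : u - a ∈ Bup bb S := by
    intro k hk
    rcases le_or_gt k j with h | h
    · exact absurd (hS hk h) hjS
    · exact hja k h
  have : u = (u - a) + a := by abel
  rw [this]
  exact AddSubgroup.add_mem _ huaB haB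

theorem inf_convex {C D : AddSubgroup G} {r : G → G → Prop}
    (hC : IsConvexRel r C) (hD : IsConvexRel r D) : IsConvexRel r (C ⊓ D) := by
  intro a u e h1 h2 ha he
  rw [AddSubgroup.mem_inf] at ha he ⊢
  exact ⟨hC a u e h1 h2 ha.1 he.1, hD a u e h1 h2 ha.2 he.2⟩

theorem exists_lead {x : G} (hx : x ≠ 0) :
    ∃ m, bb.repr x m ≠ 0 ∧ ∀ k, m < k → bb.repr x k = 0 := by
  have hr : bb.repr x ≠ 0 := fun h => hx (bb.repr.map_eq_zero_iff.mp h)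
  have hs : (bb.repr x).support.Nonempty := Finsupp.support_nonempty_iff.mpr hr
  refine ⟨(bb.repr x).support.max' hs,
    Finsupp.mem_support_iff.mp (Finset.max'_mem _ hs), fun k hk => ?_⟩
  by_contra h
  exact absurd (Finset.le_max' _ k (Finsupp.mem_support_iff.mpr h)) (not_le.mpr hk)

/-- set of leading indices of elements of `C` -/
def leadSet (C : AddSubgroup G) : Set ι :=
  {m | ∃ x ∈ C, bb.repr x m ≠ 0 ∧ ∀ k, m < k → bb.repr x k = 0}

theorem mem_of_leadSet {C : AddSubgroup G} (hC : IsConvexRel (rel bb) C)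
    {m : ι} (hm : m ∈ leadSet bb C) {y : G}
    (hya : ∀ k, m < k → bb.repr y k = 0) : y ∈ C := by
  obtain ⟨x, hxC, hx1, hx2⟩ := hm
  exact convex_mem bb C hC hxC m hx1 hx2 hya

theorem leadSet_lower {C : AddSubgroup G} (hC : IsConvexRel (rel bb) C)
    {m m' : ι} (hm : m ∈ leadSet bb C) (h : m' ≤ m) : m' ∈ leadSet bb C := by
  have hbmem : bb m' ∈ C := by
    refine mem_of_leadSet bb hC hm (fun k hk => ?_)
    rw [Module.Basis.repr_self]
    exact Finsupp.single_eq_of_ne (ne_of_lt (lt_of_le_of_lt h hk)).symm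
  refine ⟨bb m', hbmem, by simp [Module.Basis.repr_self], fun k hk => ?_⟩
  rw [Module.Basis.repr_self]
  exact Finsupp.single_eq_of_ne hk.ne'


end Stmt11Aux

open Stmt11Aux in
/-- Every torsion-free divisible abelian group admits a translation-invariant
linear order `r` such that every factor `C/C'` of a convex jump is order-isomorphic to a
subgroup of `ℚ` (expressed via an additive map `f : C → ℚ` with kernel `C'` which is an
order-embedding of the quotient), and the convex subgroups are well-ordered by inclusion. -/
theorem stmt11 {G : Type*} [AddCommGroup G]
    (htf : ∀ n : ℤ, n ≠ 0 → ∀ g : G, n • g = 0 → g = 0)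
    (hdiv : ∀ n : ℤ, n ≠ 0 → ∀ g : G, ∃ h : G, n • h = g) :
    ∃ r : G → G → Prop,
      (∀ a, r a a) ∧ (∀ a b, r a b → r b a → a = b) ∧
      (∀ a b c, r a b → r b c → r a c) ∧ (∀ a b, r a b ∨ r b a) ∧
      (∀ a b c, r a b → r (c + a) (c + b)) ∧
      (∀ C' C : AddSubgroup G, IsConvexRel r C' → IsConvexRel r C → C' < C →
        (∀ B : AddSubgroup G, IsConvexRel r B → C' ≤ B → B ≤ C → B = C' ∨ B = C) →
        ∃ f : G → ℚ,
          (∀ a b : G, a ∈ C → b ∈ C → f (a + b) = f a + f b) ∧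
          (∀ a : G, a ∈ C → (f a = 0 ↔ a ∈ C')) ∧
          (∀ a b : G, a ∈ C → b ∈ C → r a b → f a ≤ f b) ∧
          (∀ a b : G, a ∈ C → b ∈ C → f a < f b → r a b ∧ a ≠ b)) ∧
      (∀ S : Set (AddSubgroup G), (∀ C ∈ S, IsConvexRel r C) → S.Nonempty →
        ∃ C ∈ S, ∀ C' ∈ S, C ≤ C') := by
  classical
  letI : Module ℚ G := Stmt11Aux.ratModule htf hdiv
  letI : LinearOrder (Module.Basis.ofVectorSpaceIndex ℚ G) := IsWellOrder.linearOrder WellOrderingRel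
  haveI hwf : WellFoundedLT (Module.Basis.ofVectorSpaceIndex ℚ G) :=
    ⟨(WellOrderingRel.isWellOrder (α := Module.Basis.ofVectorSpaceIndex ℚ G)).wf⟩
  set bb := Module.Basis.ofVectorSpace ℚ G with hbb
  refine ⟨rel bb, rel_refl bb, fun a b h1 h2 => rel_antisymm bb h1 h2,
    fun a b c h1 h2 => rel_trans bb h1 h2, rel_total bb,
    fun a b c h => rel_add bb c h, ?_, ?_⟩
  · -- convex jumps
    intro C' C hC' hC hlt hmin
    obtain ⟨x, hxC, hxC'⟩ := SetLike.exists_of_lt hlt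
    have hx0 : x ≠ 0 := fun h => hxC' (h ▸ AddSubgroup.zero_mem C')
    obtain ⟨i, hi, hia⟩ := exists_lead bb hx0
    have hB1conv : IsConvexRel (rel bb) (C ⊓ Bup bb (Set.Ici i)) :=
      inf_convex hC (bup_convex bb _ (fun k k' hk hkk => le_trans hk hkk))
    have hB2conv : IsConvexRel (rel bb) (C ⊓ Bup bb (Set.Ioi i)) :=
      inf_convex hC (bup_convex bb _ (fun k k' hk hkk => lt_of_lt_of_le hk hkk))
    have hC'B1 : C' ≤ C ⊓ Bup bb (Set.Ici i) := by
      intro y hy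
      rw [AddSubgroup.mem_inf]
      refine ⟨hlt.le hy, fun k hk => ?_⟩
      by_contra hne
      have hy0 : y ≠ 0 := fun h => hne (by simp [h])
      obtain ⟨j, hj, hja⟩ := exists_lead bb hy0
      have hkj : k ≤ j := by
        by_contra h
        exact hne (hja k (not_le.mp h))
      have hij : i ≤ j := le_trans hk hkj
      exact hxC' (convex_mem bb C' hC' hy j hj hja
        (fun k' hk' => hia k' (lt_of_le_of_lt hij hk')))
    have hB1ne : C ⊓ Bup bb (Set.Ici i) ≠ C := by
      intro h
      have hx' : x ∈ C ⊓ Bup bb (Set.Ici i) := h.symm ▸ hxC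
      exact hi ((AddSubgroup.mem_inf.mp hx').2 i (le_refl i))
    have hB1 : C ⊓ Bup bb (Set.Ici i) = C' :=
      (hmin _ hB1conv hC'B1 inf_le_left).resolve_right hB1ne
    have hC'B2 : C' ≤ C ⊓ Bup bb (Set.Ioi i) := by
      rw [← hB1]
      exact inf_le_inf_left C (fun y hy k hk => hy k (Set.mem_Ici.mpr (le_of_lt (Set.mem_Ioi.mp hk))))
    have hB2ne : C ⊓ Bup bb (Set.Ioi i) ≠ C' := by
      intro h
      apply hxC'
      rw [← h]
      exact AddSubgroup.mem_inf.mpr ⟨hxC, fun k hk => hia k hk⟩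
    have hB2 : C ⊓ Bup bb (Set.Ioi i) = C :=
      (hmin _ hB2conv hC'B2 inf_le_left).resolve_left hB2ne
    have hvanC : ∀ y ∈ C, ∀ k, i < k → bb.repr y k = 0 := by
      intro y hy k hk
      have : y ∈ C ⊓ Bup bb (Set.Ioi i) := hB2.symm ▸ hy
      exact (AddSubgroup.mem_inf.mp this).2 k hk
    refine ⟨fun y => bb.repr y i, ?_, ?_, ?_, ?_⟩
    · intro a c _ _
      simp [map_add]
    · intro a ha
      constructor
      · intro h0
        rw [← hB1]
        refine AddSubgroup.mem_inf.mpr ⟨ha, fun k hk => ?_⟩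
        rcases eq_or_lt_of_le (Set.mem_Ici.mp hk) with rfl | h
        · exact h0
        · exact hvanC a ha k h
      · intro haC'
        rw [← hB1] at haC'
        exact (AddSubgroup.mem_inf.mp haC').2 i (Set.mem_Ici.mpr le_rfl)
    · intro a c ha hc hrel
      rcases hrel with rfl | hP
      · exact le_rfl
      obtain ⟨j, hj, hja⟩ := hP
      have hsub : c - a ∈ C := AddSubgroup.sub_mem C hc ha
      have hsi : bb.repr (c - a) i = bb.repr c i - bb.repr a i := by
        rw [map_sub, Finsupp.sub_apply]
      rcases lt_trichotomy j i with h | h | h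
      · have h0 : bb.repr (c - a) i = 0 := hja i h
        rw [hsi] at h0
        linarith
      · subst h
        rw [hsi] at hj
        linarith
      · exact absurd (hvanC _ hsub j h) hj.ne'
    · intro a c ha hc hlt'
      have hsub : c - a ∈ C := AddSubgroup.sub_mem C hc ha
      have hsi : bb.repr (c - a) i = bb.repr c i - bb.repr a i := by
        rw [map_sub, Finsupp.sub_apply]
      have hpos : 0 < bb.repr (c - a) i := by rw [hsi]; linarith
      refine ⟨Or.inr ⟨i, hpos, fun k hk => hvanC _ hsub k hk⟩, ?_⟩
      intro h
      subst h
      exact lt_irrefl _ hlt'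
  · -- well-ordering of convex subgroups
    intro S hSconv hSne
    by_cases hall : ∀ C ∈ S, ∀ m, m ∈ leadSet bb C
    · obtain ⟨C0, hC0⟩ := hSne
      refine ⟨C0, hC0, fun C' hC' y hy => ?_⟩
      by_cases hy0 : y = 0
      · subst hy0; exact AddSubgroup.zero_mem C'
      obtain ⟨j, hj, hja⟩ := exists_lead bb hy0
      exact mem_of_leadSet bb (hSconv C' hC') (hall C' hC' j) hja
    · push_neg at hall
      obtain ⟨Cw, hCwS, mw, hmw⟩ := hall
      set U : Set (Module.Basis.ofVectorSpaceIndex ℚ G) :=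
        {m | ∃ C ∈ S, m ∉ leadSet bb C} with hU
      have hUne : U.Nonempty := ⟨mw, Cw, hCwS, hmw⟩
      have hwf' : WellFounded
          (· < · : Module.Basis.ofVectorSpaceIndex ℚ G → Module.Basis.ofVectorSpaceIndex ℚ G → Prop) :=
        wellFounded_lt
      set m := hwf'.min U hUne with hm
      obtain ⟨C, hCS, hmC⟩ := hwf'.min_mem U hUne
      refine ⟨C, hCS, fun C' hC'S y hy => ?_⟩
      by_cases hy0 : y = 0
      · subst hy0; exact AddSubgroup.zero_mem C'
      obtain ⟨j, hj, hja⟩ := exists_lead bb hy0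
      have hjC : j ∈ leadSet bb C := ⟨y, hy, hj, hja⟩
      have hjm : j < m := by
        by_contra h
        push_neg at h
        exact hmC (leadSet_lower bb (hSconv C hCS) hjC h)
      have hjAll : j ∈ leadSet bb C' := by
        by_contra h
        exact hwf'.not_lt_min U ⟨C', hC'S, h⟩ hjm
      obtain ⟨x', hx'C', hx'j, hx'a⟩ := hjAll
      exact convex_mem bb C' (hSconv C' hC'S) hx'C' j hx'j hx'a hja
end

section
/- Any Conradian left-ordered group is locally indicable: every nontrivial finitely generated subgroup admits a surjective group homomorphism onto ℤ. -/
namespace Stmt12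

section Grp
variable {Γ : Type*} [Group Γ] [LinearOrder Γ]

/-- Convexity of a subgroup w.r.t. the order. -/
def IsConvex (D : Subgroup Γ) : Prop :=
  ∀ ⦃x y z : Γ⦄, x ∈ D → z ∈ D → x ≤ y → y ≤ z → y ∈ D

section Tool
variable (hinv : ∀ a b c : Γ, a ≤ b → c * a ≤ c * b)
include hinv

theorem lmul_le {a b : Γ} (c : Γ) (h : a ≤ b) : c * a ≤ c * b := hinv a b c h

theorem lmul_lt {a b : Γ} (c : Γ) (h : a < b) : c * a < c * b :=
  lt_of_le_of_ne (hinv a b c h.le) fun e => h.ne (mul_left_cancel e)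

theorem lmul_le_cancel {a b c : Γ} (h : c * a ≤ c * b) : a ≤ b := by
  have h2 := hinv _ _ c⁻¹ h
  simpa [inv_mul_cancel_left] using h2

theorem lmul_lt_cancel {a b c : Γ} (h : c * a < c * b) : a < b :=
  lt_of_le_of_ne (lmul_le_cancel hinv h.le) fun e => h.ne (by rw [e])

theorem inv_lt_one_of {a : Γ} (h : 1 < a) : a⁻¹ < 1 := by
  have := lmul_lt hinv a⁻¹ h
  simpa using this

theorem one_lt_inv_of {a : Γ} (h : a < 1) : 1 < a⁻¹ := by
  have := lmul_lt hinv a⁻¹ h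
  simpa using this

theorem one_le_inv_of {a : Γ} (h : a ≤ 1) : 1 ≤ a⁻¹ := by
  have := lmul_le hinv a⁻¹ h
  simpa using this

theorem inv_le_one_of {a : Γ} (h : 1 ≤ a) : a⁻¹ ≤ 1 := by
  have := lmul_le hinv a⁻¹ h
  simpa using this

theorem one_le_pow_of {a : Γ} (h : 1 ≤ a) : ∀ n : ℕ, 1 ≤ a ^ n := by
  intro n
  induction n with
  | zero => simp
  | succ n ih =>
      rw [pow_succ]
      exact le_trans ih (by simpa using lmul_le hinv (a ^ n) h)

theorem one_lt_pow_of {a : Γ} (h : 1 < a) {n : ℕ} (hn : n ≠ 0) : 1 < a ^ n := by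
  cases n with
  | zero => exact absurd rfl hn
  | succ n =>
      rw [pow_succ]
      exact lt_of_le_of_lt (one_le_pow_of hinv h.le n)
        (by simpa using lmul_lt hinv (a ^ n) h)

theorem pow_le_pow_of {a : Γ} (h : 1 ≤ a) {m n : ℕ} (hmn : m ≤ n) : a ^ m ≤ a ^ n := by
  obtain ⟨k, rfl⟩ := Nat.exists_eq_add_of_le hmn
  rw [pow_add]
  simpa using lmul_le hinv (a ^ m) (one_le_pow_of hinv h k)

theorem pow_lt_pow_of {a : Γ} (h : 1 < a) {m n : ℕ} (hmn : m < n) : a ^ m < a ^ n := by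
  obtain ⟨k, rfl⟩ := Nat.exists_eq_add_of_le hmn.le
  have hk : k ≠ 0 := by rintro rfl; simp at hmn
  rw [pow_add]
  simpa using lmul_lt hinv (a ^ m) (one_lt_pow_of hinv h hk)

theorem one_le_zpow_of {a : Γ} (h : 1 ≤ a) {i : ℤ} (hi : 0 ≤ i) : 1 ≤ a ^ i := by
  lift i to ℕ using hi
  rw [zpow_natCast]
  exact one_le_pow_of hinv h i

theorem one_lt_zpow_of {a : Γ} (h : 1 < a) {i : ℤ} (hi : 0 < i) : 1 < a ^ i := by
  lift i to ℕ using hi.le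
  rw [zpow_natCast]
  exact one_lt_pow_of hinv h (by exact_mod_cast hi.ne')

theorem zpow_le_zpow_of {a : Γ} (h : 1 ≤ a) {i j : ℤ} (hij : i ≤ j) : a ^ i ≤ a ^ j := by
  have he : a ^ j = a ^ i * a ^ (j - i) := by
    rw [← zpow_add]
    congr 1
    ring
  rw [he]
  simpa using lmul_le hinv (a ^ i) (one_le_zpow_of hinv h (by omega))

theorem zpow_lt_zpow_of {a : Γ} (h : 1 < a) {i j : ℤ} (hij : i < j) : a ^ i < a ^ j := by
  have he : a ^ j = a ^ i * a ^ (j - i) := by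
    rw [← zpow_add]
    congr 1
    ring
  rw [he]
  simpa using lmul_lt hinv (a ^ i) (one_lt_zpow_of hinv h (by omega))

end Tool

section Conrad
variable (hinv : ∀ a b c : Γ, a ≤ b → c * a ≤ c * b)
variable (hconrad : ∀ a b : Γ, 1 < a → 1 < b → ∃ n : ℕ, a * b < (b * a) ^ n)
include hinv hconrad

/-- The key bounding lemma (P): if `x < a ^ n` then right translates `x * a ^ j`
are still bounded by powers of `a`. -/
theorem lemP {a : Γ} (ha : 1 < a) {x : Γ} {n : ℕ} (hx : x < a ^ n) (j : ℕ) :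
    ∃ N : ℕ, x * a ^ j < a ^ N := by
  by_contra hcon
  push_neg at hcon
  have fam : ∀ i : ℕ, x⁻¹ * a ^ i ≤ a ^ j := by
    intro i
    have h2 := lmul_le hinv x⁻¹ (hcon i)
    simpa [inv_mul_cancel_left] using h2
  set r := x⁻¹ * a ^ n with hr
  have hr1 : 1 < r := by
    have := lmul_lt hinv x⁻¹ hx
    simpa [hr] using this
  have powfam : ∀ i k : ℕ, (r * a ^ i) ^ k ≤ a ^ j := by
    intro i k
    induction k with
    | zero => simpa using one_le_pow_of hinv ha.le j
    | succ k ih =>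
        rw [pow_succ']
        refine le_trans (lmul_le hinv _ ih) ?_
        have he : r * a ^ i * a ^ j = x⁻¹ * a ^ (n + i + j) := by
          simp [hr, pow_add, mul_assoc]
        rw [he]
        exact fam _
  have hstep : ∀ i : ℕ, a ^ (i + 1) * r ≤ a ^ j := by
    intro i
    obtain ⟨k, hk⟩ := hconrad (a ^ (i + 1)) r
      (one_lt_pow_of hinv ha (Nat.succ_ne_zero i)) hr1
    exact le_trans hk.le (powfam (i + 1) k)
  have h1 : a ^ (j + 1) * r ≤ a ^ j := hstep j
  have h2 : a ^ j < a ^ (j + 1) := pow_lt_pow_of hinv ha (Nat.lt_succ_self j)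
  have h3 : a ^ (j + 1) < a ^ (j + 1) * r := by
    simpa using lmul_lt hinv (a ^ (j + 1)) hr1
  exact absurd (lt_of_lt_of_le (lt_trans h2 h3) h1) (lt_irrefl _)

/-- The subgroup of elements bounded (together with their inverses) by powers of `a`. -/
def Va {a : Γ} (ha : 1 < a) : Subgroup Γ where
  carrier := {x | (∃ n : ℕ, x < a ^ n) ∧ (∃ m : ℕ, x⁻¹ < a ^ m)}
  one_mem' := ⟨⟨1, by simpa using ha⟩, ⟨1, by simpa using ha⟩⟩
  inv_mem' := fun {x} hx => ⟨hx.2, by simpa using hx.1⟩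
  mul_mem' := fun {x y} hx hy => by
    obtain ⟨⟨nx, hnx⟩, ⟨mx, hmx⟩⟩ := hx
    obtain ⟨⟨ny, hny⟩, ⟨my, hmy⟩⟩ := hy
    constructor
    · obtain ⟨N, hN⟩ := lemP hinv hconrad ha hnx ny
      exact ⟨N, lt_trans (lmul_lt hinv x hny) hN⟩
    · obtain ⟨N, hN⟩ := lemP hinv hconrad ha hmy mx
      refine ⟨N, ?_⟩
      rw [mul_inv_rev]
      exact lt_trans (lmul_lt hinv y⁻¹ hmx) hN

theorem mem_Va {a : Γ} (ha : 1 < a) {x : Γ} :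
    x ∈ Va hinv hconrad ha ↔ (∃ n : ℕ, x < a ^ n) ∧ (∃ m : ℕ, x⁻¹ < a ^ m) :=
  Iff.rfl

theorem self_mem_Va {a : Γ} (ha : 1 < a) : a ∈ Va hinv hconrad ha := by
  rw [mem_Va]
  constructor
  · exact ⟨2, by simpa using pow_lt_pow_of hinv ha (by norm_num : (1:ℕ) < 2)⟩
  · exact ⟨1, by simpa using lt_trans (inv_lt_one_of hinv ha) ha⟩

theorem Va_convex {a : Γ} (ha : 1 < a) : IsConvex (Va hinv hconrad ha) := by
  intro x y z hx hz hxy hyz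
  obtain ⟨nz, hnz⟩ := hz.1
  obtain ⟨mx, hmx⟩ := hx.2
  have hq : x⁻¹ * y ∈ Va hinv hconrad ha := by
    rw [mem_Va]
    constructor
    · obtain ⟨N, hN⟩ := lemP hinv hconrad ha hmx nz
      refine ⟨N, lt_of_le_of_lt (lmul_le hinv x⁻¹ hyz) (lt_trans (lmul_lt hinv x⁻¹ hnz) hN)⟩
    · refine ⟨1, ?_⟩
      have h1 : (1 : Γ) ≤ x⁻¹ * y := by simpa using lmul_le hinv x⁻¹ hxy
      have h2 : (x⁻¹ * y)⁻¹ ≤ 1 := inv_le_one_of hinv h1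
      calc (x⁻¹ * y)⁻¹ ≤ 1 := h2
        _ < a ^ 1 := by simpa using ha
  have := (Va hinv hconrad ha).mul_mem hx hq
  simpa [mul_inv_cancel_left] using this

/-- Convex subgroups form a chain. -/
theorem convex_chain {D₁ D₂ : Subgroup Γ} (h₁ : IsConvex D₁) (h₂ : IsConvex D₂) :
    D₁ ≤ D₂ ∨ D₂ ≤ D₁ := by
  by_contra hcon
  push_neg at hcon
  obtain ⟨hno1, hno2⟩ := hcon
  rw [SetLike.not_le_iff_exists] at hno1 hno2
  obtain ⟨d₁, hd₁, hd₁'⟩ := hno1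
  obtain ⟨d₂, hd₂, hd₂'⟩ := hno2
  have key : ∀ D D' : Subgroup Γ, ∀ d : Γ, d ∈ D → d ∉ D' →
      ∃ e, e ∈ D ∧ e ∉ D' ∧ 1 ≤ e := by
    intro D D' d hd hd'
    rcases le_total 1 d with h | h
    · exact ⟨d, hd, hd', h⟩
    · refine ⟨d⁻¹, D.inv_mem hd, fun hc => hd' (by simpa using D'.inv_mem hc), ?_⟩
      exact one_le_inv_of hinv h
  obtain ⟨e₁, he₁D, he₁D', he₁⟩ := key D₁ D₂ d₁ hd₁ hd₁'
  obtain ⟨e₂, he₂D, he₂D', he₂⟩ := key D₂ D₁ d₂ hd₂ hd₂'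
  rcases le_total e₁ e₂ with h | h
  · exact he₁D' (h₂ D₂.one_mem he₂D he₁ h)
  · exact he₂D' (h₁ D₁.one_mem he₁D he₂ h)

end Conrad

section WithC
variable (hinv : ∀ a b c : Γ, a ≤ b → c * a ≤ c * b)
variable (hconrad : ∀ a b : Γ, 1 < a → 1 < b → ∃ n : ℕ, a * b < (b * a) ^ n)
variable (C : Subgroup Γ) (hCconv : IsConvex C)
variable (hstrong : ∀ b : Γ, 1 < b → b ∉ C → ∀ x : Γ, ∃ n : ℕ, x < b ^ n ∧ x⁻¹ < b ^ n)
include hinv hCconv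

theorem posC_left {g v : Γ} (hg : 1 < g) (hgC : g ∉ C) (hv : v ∈ C) : 1 < g * v := by
  rcases le_total 1 v with h | h
  · exact lt_of_lt_of_le hg (by simpa using lmul_le hinv g h)
  · by_contra hc
    push_neg at hc
    have h2 : v ≤ g⁻¹ := lmul_le_cancel hinv (show g * v ≤ g * g⁻¹ by simpa using hc)
    have h3 : g⁻¹ ≤ 1 := (inv_lt_one_of hinv hg).le
    exact hgC (by simpa using C.inv_mem (hCconv hv C.one_mem h2 h3))

theorem posC_right {g v : Γ} (hg : 1 < g) (hgC : g ∉ C) (hv : v ∈ C) : 1 < v * g := by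
  rcases le_total 1 v with h | h
  · calc (1:Γ) ≤ v := h
      _ < v * g := by simpa using lmul_lt hinv v hg
  · by_contra hc
    push_neg at hc
    have h2 : g ≤ v⁻¹ := lmul_le_cancel hinv (show v * g ≤ v * v⁻¹ by simpa using hc)
    exact hgC (hCconv C.one_mem (C.inv_mem hv) hg.le h2)

include hconrad hstrong in
theorem not_le_core {g w : Γ} (hg : 1 < g) (hgC : g ∉ C) (hw : w ∈ C) :
    ¬ (g * g ≤ w * g) := by
  intro hB
  set s := w⁻¹ * g with hs
  have hs1 : 1 < s := posC_right hinv C hCconv hg hgC (C.inv_mem hw)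
  have hsC : s ∉ C := by
    intro hc
    refine hgC ?_
    have h2 : w * s ∈ C := C.mul_mem hw hc
    simpa [hs, mul_inv_cancel_left] using h2
  have hsg : s * g ≤ g := by
    have h0 := lmul_le hinv w⁻¹ hB
    calc s * g = w⁻¹ * (g * g) := by rw [hs]; group
      _ ≤ w⁻¹ * (w * g) := h0
      _ = g := by group
  have chain : ∀ k : ℕ, s ^ k * g ≤ g := by
    intro k
    induction k with
    | zero => simp
    | succ k ih =>
        calc s ^ (k + 1) * g = s * (s ^ k * g) := by rw [pow_succ']; group
          _ ≤ s * g := lmul_le hinv s ih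
          _ ≤ g := hsg
  obtain ⟨K, hK, -⟩ := hstrong s hs1 hsC g
  have h1 : s ^ K < s ^ K * g := by simpa using lmul_lt hinv (s ^ K) hg
  exact absurd (lt_of_lt_of_le (lt_trans hK h1) (chain K)) (lt_irrefl _)

theorem conj_lt_right {g u : Γ} (hg : 1 < g) (hgC : g ∉ C) (hu : u ∈ C) :
    g * u * g⁻¹ < g := by
  by_contra hc
  push_neg at hc
  have h1 : (1:Γ) ≤ u * g⁻¹ := by
    have h0 := lmul_le hinv g⁻¹ hc
    calc (1:Γ) = g⁻¹ * g := by group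
      _ ≤ g⁻¹ * (g * u * g⁻¹) := h0
      _ = u * g⁻¹ := by group
  have h2 : u⁻¹ ≤ g⁻¹ := by
    have h0 := lmul_le hinv u⁻¹ h1
    calc u⁻¹ = u⁻¹ * 1 := by rw [mul_one]
      _ ≤ u⁻¹ * (u * g⁻¹) := h0
      _ = g⁻¹ := by group
  have h3 : g⁻¹ ≤ 1 := (inv_lt_one_of hinv hg).le
  exact hgC (by simpa using C.inv_mem (hCconv (C.inv_mem hu) C.one_mem h2 h3))

include hconrad hstrong in
theorem conj_lt_left {g u : Γ} (hg : 1 < g) (hgC : g ∉ C) (hu : u ∈ C) :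
    g⁻¹ * u * g < g := by
  by_contra hc
  push_neg at hc
  have hB : g * g ≤ u * g := by
    have h0 := lmul_le hinv g hc
    calc g * g ≤ g * (g⁻¹ * u * g) := h0
      _ = u * g := by group
  exact not_le_core hinv hconrad C hCconv hstrong hg hgC hu hB

include hstrong in
theorem conj_mem_right_aux {g x : Γ} (hg : 1 < g) (hgC : g ∉ C) (hx : x ∈ C)
    (hy1 : 1 ≤ g * x * g⁻¹) : g * x * g⁻¹ ∈ C := by
  by_contra hyC
  have hy : 1 < g * x * g⁻¹ :=
    lt_of_le_of_ne hy1 (fun e => hyC (e ▸ C.one_mem))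
  obtain ⟨m, hm, -⟩ := hstrong _ hy hyC g
  have hlt : (g * x * g⁻¹) ^ m < g := by
    rw [conj_pow]
    exact conj_lt_right hinv C hCconv hg hgC (C.pow_mem hx m)
  exact absurd (lt_trans hm hlt) (lt_irrefl _)

include hstrong in
theorem conj_mem_right {g x : Γ} (hg : 1 < g) (hgC : g ∉ C) (hx : x ∈ C) :
    g * x * g⁻¹ ∈ C := by
  rcases le_total 1 (g * x * g⁻¹) with h | h
  · exact conj_mem_right_aux hinv C hCconv hstrong hg hgC hx h
  · have h2 : (1:Γ) ≤ g * x⁻¹ * g⁻¹ := by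
      have he : (g * x * g⁻¹)⁻¹ = g * x⁻¹ * g⁻¹ := by group
      rw [← he]
      exact one_le_inv_of hinv h
    have h3 := conj_mem_right_aux hinv C hCconv hstrong hg hgC (C.inv_mem hx) h2
    have h4 := C.inv_mem h3
    have he : (g * x⁻¹ * g⁻¹)⁻¹ = g * x * g⁻¹ := by group
    rwa [he] at h4

include hconrad hstrong in
theorem conj_mem_left_aux {g x : Γ} (hg : 1 < g) (hgC : g ∉ C) (hx : x ∈ C)
    (hy1 : 1 ≤ g⁻¹ * x * g) : g⁻¹ * x * g ∈ C := by
  by_contra hyC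
  have hy : 1 < g⁻¹ * x * g :=
    lt_of_le_of_ne hy1 (fun e => hyC (e ▸ C.one_mem))
  obtain ⟨m, hm, -⟩ := hstrong _ hy hyC g
  have hlt : (g⁻¹ * x * g) ^ m < g := by
    have he : (g⁻¹ * x * g) ^ m = g⁻¹ * x ^ m * g := by
      have := conj_pow (a := g⁻¹) (b := x) (i := m)
      simpa [inv_inv] using this
    rw [he]
    exact conj_lt_left hinv hconrad C hCconv hstrong hg hgC (C.pow_mem hx m)
  exact absurd (lt_trans hm hlt) (lt_irrefl _)

include hconrad hstrong in
theorem conj_mem_left {g x : Γ} (hg : 1 < g) (hgC : g ∉ C) (hx : x ∈ C) :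
    g⁻¹ * x * g ∈ C := by
  rcases le_total 1 (g⁻¹ * x * g) with h | h
  · exact conj_mem_left_aux hinv hconrad C hCconv hstrong hg hgC hx h
  · have h2 : (1:Γ) ≤ g⁻¹ * x⁻¹ * g := by
      have he : (g⁻¹ * x * g)⁻¹ = g⁻¹ * x⁻¹ * g := by group
      rw [← he]
      exact one_le_inv_of hinv h
    have h3 := conj_mem_left_aux hinv hconrad C hCconv hstrong hg hgC (C.inv_mem hx) h2
    have h4 := C.inv_mem h3
    have he : (g⁻¹ * x⁻¹ * g)⁻¹ = g⁻¹ * x * g := by group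
    rwa [he] at h4

include hconrad hstrong in
theorem C_conj_mem {x : Γ} (hx : x ∈ C) (g : Γ) : g * x * g⁻¹ ∈ C := by
  rcases lt_trichotomy 1 g with hg | hg | hg
  · by_cases hgC : g ∈ C
    · exact C.mul_mem (C.mul_mem hgC hx) (C.inv_mem hgC)
    · exact conj_mem_right hinv C hCconv hstrong hg hgC hx
  · rw [← hg]; simpa using hx
  · by_cases hgC : g ∈ C
    · exact C.mul_mem (C.mul_mem hgC hx) (C.inv_mem hgC)
    · have hg1 : 1 < g⁻¹ := one_lt_inv_of hinv hg
      have hgC1 : g⁻¹ ∉ C := fun hc => hgC (by simpa using C.inv_mem hc)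
      have h := conj_mem_left hinv hconrad C hCconv hstrong hg1 hgC1 hx
      simpa [inv_inv] using h

include hstrong in
theorem cp_pos {α β : Γ} (hα : 1 < α) (hαC : α ∉ C) (hβ : 1 < β) :
    1 < β⁻¹ * α * β := by
  rcases lt_trichotomy 1 (β⁻¹ * α * β) with h | h | h
  · exact h
  · exfalso
    have : α = 1 := by
      have h2 : β * (β⁻¹ * α * β) * β⁻¹ = β * 1 * β⁻¹ := by rw [← h]
      have h3 : β * (β⁻¹ * α * β) * β⁻¹ = α := by group
      have h4 : β * (1:Γ) * β⁻¹ = 1 := by group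
      rw [h3, h4] at h2
      exact h2
    exact absurd this hα.ne'
  · exfalso
    have hαβ : α * β < β := by
      have h0 := lmul_lt hinv β h
      calc α * β = β * (β⁻¹ * α * β) := by group
        _ < β * 1 := h0
        _ = β := mul_one β
    have chain : ∀ k : ℕ, α ^ (k + 1) * β < β := by
      intro k
      induction k with
      | zero => simpa using hαβ
      | succ k ih =>
          calc α ^ (k + 2) * β = α * (α ^ (k + 1) * β) := by rw [pow_succ']; group
            _ < α * β := lmul_lt hinv α ih
            _ < β := hαβ
    obtain ⟨K, hK, -⟩ := hstrong α hα hαC β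
    cases K with
    | zero =>
        simp only [pow_zero] at hK
        exact absurd hK (not_lt.mpr hβ.le)
    | succ K =>
        have h1 : α ^ (K + 1) < α ^ (K + 1) * β := by
          simpa using lmul_lt hinv (α ^ (K + 1)) hβ
        exact absurd (lt_trans (lt_trans hK h1) (chain K)) (lt_irrefl _)

include hconrad hstrong in
theorem cpc {u w : Γ} (hu : 1 < u) (huC : u ∉ C) : 1 < w⁻¹ * u * w := by
  rcases lt_trichotomy 1 w with hw | hw | hw
  · exact cp_pos hinv C hCconv hstrong hu huC hw
  · rw [← hw]; simpa using hu
  · by_contra hc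
    push_neg at hc
    set v := w⁻¹ * u * w with hv
    have hvC : v ∉ C := by
      intro hm
      refine huC ?_
      have h2 := C_conj_mem hinv hconrad C hCconv hstrong hm w
      have he : w * v * w⁻¹ = u := by rw [hv]; group
      rwa [he] at h2
    have hv1 : v < 1 := lt_of_le_of_ne hc (fun e => hvC (e ▸ C.one_mem))
    have hvi : 1 < v⁻¹ := one_lt_inv_of hinv hv1
    have hviC : v⁻¹ ∉ C := fun hm => hvC (by simpa using C.inv_mem hm)
    have hwi : 1 < w⁻¹ := one_lt_inv_of hinv hw
    have h2 := cp_pos hinv C hCconv hstrong hvi hviC hwi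
    have he : (w⁻¹)⁻¹ * v⁻¹ * w⁻¹ = u⁻¹ := by rw [hv]; group
    rw [he] at h2
    have : u < 1 := by
      have h3 := lmul_lt hinv u h2
      simpa using h3
    exact absurd hu (not_lt.mpr this.le)

end WithC
end Grp

set_option maxHeartbeats 1000000 in
theorem core {Γ : Type*} [Group Γ] [LinearOrder Γ] [Nontrivial Γ]
    (hinv : ∀ a b c : Γ, a ≤ b → c * a ≤ c * b)
    (hconrad : ∀ a b : Γ, 1 < a → 1 < b → ∃ n : ℕ, a * b < (b * a) ^ n)
    (hfg : Group.FG Γ) :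
    ∃ f : Γ →* Multiplicative ℤ, Function.Surjective f := by
  classical
  obtain ⟨S, hS⟩ := Group.fg_def.mp hfg
  have hSne1 : ∃ s ∈ S, s ≠ (1 : Γ) := by
    by_contra hcon
    push_neg at hcon
    have hle : Subgroup.closure (S : Set Γ) ≤ ⊥ := by
      rw [Subgroup.closure_le]
      intro s hs
      simp only [SetLike.mem_coe, Subgroup.mem_bot]
      exact hcon s (by simpa using hs)
    obtain ⟨x, y, hxy⟩ := exists_pair_ne Γ
    have hx : x = 1 := by
      have hm : x ∈ (⊥ : Subgroup Γ) := hle (hS ▸ Subgroup.mem_top x)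
      simpa [Subgroup.mem_bot] using hm
    have hy : y = 1 := by
      have hm : y ∈ (⊥ : Subgroup Γ) := hle (hS ▸ Subgroup.mem_top y)
      simpa [Subgroup.mem_bot] using hm
    exact hxy (hx.trans hy.symm)
  obtain ⟨s₀, hs₀S, hs₀⟩ := hSne1
  have hSne : S.Nonempty := ⟨s₀, hs₀S⟩
  set gstar := S.sup' hSne (fun s => max s s⁻¹) with hgdef
  have hub : ∀ s ∈ S, s ≤ gstar ∧ s⁻¹ ≤ gstar := by
    intro s hs
    constructor
    · exact le_trans (le_max_left s s⁻¹) (Finset.le_sup' (fun t => max t t⁻¹) hs)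
    · exact le_trans (le_max_right s s⁻¹) (Finset.le_sup' (fun t => max t t⁻¹) hs)
  have hg1 : 1 < gstar := by
    rcases lt_trichotomy 1 s₀ with h | h | h
    · exact lt_of_lt_of_le h (hub s₀ hs₀S).1
    · exact absurd h.symm hs₀
    · exact lt_of_lt_of_le (one_lt_inv_of hinv h) (hub s₀ hs₀S).2
  have hbotconv : IsConvex (⊥ : Subgroup Γ) := by
    intro x y z hx hz hxy hyz
    simp only [Subgroup.mem_bot] at hx hz ⊢
    subst hx; subst hz
    exact le_antisymm hyz hxy
  have hgbot : gstar ∉ (⊥ : Subgroup Γ) := by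
    simp only [Subgroup.mem_bot]
    exact hg1.ne'
  obtain ⟨C, hCconv, hgstarC, hCmax⟩ :
      ∃ C : Subgroup Γ, IsConvex C ∧ gstar ∉ C ∧
        ∀ D : Subgroup Γ, IsConvex D → gstar ∉ D → D ≤ C := by
    refine ⟨{ carrier := {x | ∃ D : Subgroup Γ, IsConvex D ∧ gstar ∉ D ∧ x ∈ D}
              one_mem' := ⟨⊥, hbotconv, hgbot, Subgroup.one_mem ⊥⟩
              inv_mem' := ?hinvm
              mul_mem' := ?hmulm }, ?hconv, ?hnotm, ?hmax⟩
    case hinvm =>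
      intro x hx
      obtain ⟨D, h1, h2, h3⟩ := hx
      exact ⟨D, h1, h2, D.inv_mem h3⟩
    case hmulm =>
      intro x y hx hy
      obtain ⟨D1, hc1, hg1', hx⟩ := hx
      obtain ⟨D2, hc2, hg2', hy⟩ := hy
      rcases convex_chain hinv hconrad hc1 hc2 with h | h
      · exact ⟨D2, hc2, hg2', D2.mul_mem (h hx) hy⟩
      · exact ⟨D1, hc1, hg1', D1.mul_mem hx (h hy)⟩
    case hconv =>
      intro x y z hx hz hxy hyz
      obtain ⟨D1, hc1, hD1, hx1⟩ := hx
      obtain ⟨D2, hc2, hD2, hz2⟩ := hz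
      rcases convex_chain hinv hconrad hc1 hc2 with h | h
      · exact ⟨D2, hc2, hD2, hc2 (h hx1) hz2 hxy hyz⟩
      · exact ⟨D1, hc1, hD1, hc1 hx1 (h hz2) hxy hyz⟩
    case hnotm =>
      rintro ⟨D, h1, h2, h3⟩
      exact h2 h3
    case hmax =>
      exact fun D hD hgD x hx => ⟨D, hD, hgD, hx⟩
  have htop : ∀ D : Subgroup Γ, IsConvex D → gstar ∈ D → ∀ x : Γ, x ∈ D := by
    intro D hD hgD x
    have hle : Subgroup.closure (S : Set Γ) ≤ D := by
      rw [Subgroup.closure_le]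
      intro s hs
      rw [Finset.mem_coe] at hs
      rcases le_total 1 s with h | h
      · exact hD D.one_mem hgD h (hub s hs).1
      · have h2 : s⁻¹ ∈ D := hD D.one_mem hgD (one_le_inv_of hinv h) (hub s hs).2
        simpa using D.inv_mem h2
    exact hle (hS ▸ Subgroup.mem_top x)
  have hstrong : ∀ b : Γ, 1 < b → b ∉ C → ∀ x : Γ, ∃ n : ℕ, x < b ^ n ∧ x⁻¹ < b ^ n := by
    intro b hb hbC x
    have hVC : gstar ∈ Va hinv hconrad hb := by
      by_contra hgV
      exact hbC (hCmax _ (Va_convex hinv hconrad hb) hgV (self_mem_Va hinv hconrad hb))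
    have hx := htop _ (Va_convex hinv hconrad hb) hVC x
    rw [mem_Va] at hx
    obtain ⟨⟨n1, h1⟩, ⟨n2, h2⟩⟩ := hx
    exact ⟨n1 + n2 + 1,
      lt_of_lt_of_le h1 (pow_le_pow_of hinv hb.le (by omega)),
      lt_of_lt_of_le h2 (pow_le_pow_of hinv hb.le (by omega))⟩
  have hnorm : ∀ x ∈ C, ∀ g : Γ, g * x * g⁻¹ ∈ C := by
    intro x hx g
    exact C_conj_mem hinv hconrad C hCconv hstrong hx g
  haveI hNormal : C.Normal := ⟨hnorm⟩
  -- positivity on the quotient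
  set posQ : Γ ⧸ C → Prop := fun q => ∃ u : Γ, 1 < u ∧ u ∉ C ∧ (u : Γ ⧸ C) = q with hposQdef
  have posQ_mk : ∀ u : Γ, posQ (u : Γ ⧸ C) ↔ (1 < u ∧ u ∉ C) := by
    intro u
    constructor
    · rintro ⟨v, hv1, hvC, he⟩
      have hc : v⁻¹ * u ∈ C := (QuotientGroup.eq).mp he
      have huC : u ∉ C := by
        intro hm
        refine hvC ?_
        have h2 : u * (v⁻¹ * u)⁻¹ ∈ C := C.mul_mem hm (C.inv_mem hc)
        have he2 : u * (v⁻¹ * u)⁻¹ = v := by group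
        rwa [he2] at h2
      have hu1 : 1 < u := by
        have h2 := posC_left hinv C hCconv hv1 hvC hc
        have he2 : v * (v⁻¹ * u) = u := by group
        rwa [he2] at h2
      exact ⟨hu1, huC⟩
    · rintro ⟨h1, h2⟩
      exact ⟨u, h1, h2, rfl⟩
  have posQ_one : ¬ posQ (1 : Γ ⧸ C) := by
    rintro ⟨u, h1, h2, he⟩
    exact h2 ((QuotientGroup.eq_one_iff u).mp he)
  have posQ_excl : ∀ q : Γ ⧸ C, posQ q → posQ q⁻¹ → False := by
    rintro q ⟨u, hu1, huC, rfl⟩ hq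
    have h2 : posQ ((u⁻¹ : Γ) : Γ ⧸ C) := by
      rw [QuotientGroup.mk_inv]; exact hq
    rw [posQ_mk] at h2
    have h3 : u < 1 := by
      have h4 := lmul_lt hinv u h2.1
      simpa using h4
    exact absurd hu1 (not_lt.mpr h3.le)
  have posQ_mul : ∀ q₁ q₂ : Γ ⧸ C, posQ q₁ → posQ q₂ → posQ (q₁ * q₂) := by
    rintro q₁ q₂ ⟨u, hu1, huC, rfl⟩ ⟨v, hv1, hvC, rfl⟩
    rw [← QuotientGroup.mk_mul, posQ_mk]
    constructor
    · exact lt_trans hu1 (by simpa using lmul_lt hinv u hv1)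
    · intro hm
      have huv : u ≤ u * v := by simpa using (lmul_le hinv u hv1.le)
      exact huC (hCconv C.one_mem hm hu1.le huv)
  have posQ_conj : ∀ (q p : Γ ⧸ C), posQ q → posQ (p⁻¹ * q * p) := by
    rintro q p ⟨u, hu1, huC, rfl⟩
    obtain ⟨w, rfl⟩ := QuotientGroup.mk_surjective p
    have he : ((w⁻¹ * u * w : Γ) : Γ ⧸ C) = ((w : Γ ⧸ C))⁻¹ * (u : Γ ⧸ C) * (w : Γ ⧸ C) := by
      rw [QuotientGroup.mk_mul, QuotientGroup.mk_mul, QuotientGroup.mk_inv]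
    rw [← he, posQ_mk]
    refine ⟨cpc hinv hconrad C hCconv hstrong hu1 huC, ?_⟩
    intro hm
    have h2 := hnorm _ hm w
    have he2 : w * (w⁻¹ * u * w) * w⁻¹ = u := by group
    rw [he2] at h2
    exact huC h2
  have posQ_tri : ∀ q : Γ ⧸ C, q = 1 ∨ posQ q ∨ posQ q⁻¹ := by
    intro q
    obtain ⟨x, rfl⟩ := QuotientGroup.mk_surjective q
    by_cases hx : x ∈ C
    · exact Or.inl ((QuotientGroup.eq_one_iff x).mpr hx)
    · rcases lt_trichotomy 1 x with h | h | h
      · exact Or.inr (Or.inl ((posQ_mk x).mpr ⟨h, hx⟩))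
      · exact absurd (h ▸ C.one_mem) hx
      · refine Or.inr (Or.inr ?_)
        rw [← QuotientGroup.mk_inv, posQ_mk]
        exact ⟨one_lt_inv_of hinv h, fun hc => hx (by simpa using C.inv_mem hc)⟩
  letI instLO : LinearOrder (Γ ⧸ C) :=
    { le := fun q₁ q₂ => q₁ = q₂ ∨ posQ (q₁⁻¹ * q₂)
      lt := fun q₁ q₂ => posQ (q₁⁻¹ * q₂)
      le_refl := fun a => Or.inl rfl
      le_trans := by
        rintro a b c (rfl | hab) hbc
        · exact hbc
        rcases hbc with rfl | hbc
        · exact Or.inr hab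
        · refine Or.inr ?_
          have h := posQ_mul _ _ hab hbc
          have he : a⁻¹ * b * (b⁻¹ * c) = a⁻¹ * c := by group
          rwa [he] at h
      lt_iff_le_not_ge := by
        intro a b
        constructor
        · intro h
          refine ⟨Or.inr h, ?_⟩
          rintro (rfl | h2)
          · exact posQ_one (by simpa using h)
          · refine posQ_excl _ h ?_
            have he : (a⁻¹ * b)⁻¹ = b⁻¹ * a := by group
            rwa [he]
        · rintro ⟨rfl | h1, h2⟩
          · exact absurd (Or.inl rfl) h2
          · exact h1
      le_antisymm := by
        rintro a b (rfl | h1) h2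
        · rfl
        rcases h2 with e | h2
        · exact e.symm
        · exfalso
          refine posQ_excl _ h1 ?_
          have he : (a⁻¹ * b)⁻¹ = b⁻¹ * a := by group
          rwa [he]
      le_total := by
        intro a b
        rcases posQ_tri (a⁻¹ * b) with he | hp | hp
        · exact Or.inl (Or.inl (by rwa [inv_mul_eq_one] at he))
        · exact Or.inl (Or.inr hp)
        · refine Or.inr (Or.inr ?_)
          have he : (a⁻¹ * b)⁻¹ = b⁻¹ * a := by group
          rwa [he] at hp
      toDecidableLE := fun _ _ => Classical.dec _ }
  have hle_iff : ∀ a b : Γ ⧸ C, a ≤ b ↔ (a = b ∨ posQ (a⁻¹ * b)) := fun _ _ => Iff.rfl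
  have hlt_iff : ∀ a b : Γ ⧸ C, a < b ↔ posQ (a⁻¹ * b) := fun _ _ => Iff.rfl
  have hinvQ : ∀ a b c : Γ ⧸ C, a ≤ b → c * a ≤ c * b := by
    intro a b c hab
    rcases (hle_iff a b).mp hab with rfl | h
    · exact le_refl _
    · rw [hle_iff]
      refine Or.inr ?_
      have he : (c * a)⁻¹ * (c * b) = a⁻¹ * b := by group
      rwa [he]
  have hrmul_le : ∀ (a b c : Γ ⧸ C), a ≤ b → a * c ≤ b * c := by
    intro a b c hab
    rcases (hle_iff a b).mp hab with rfl | h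
    · exact le_refl _
    · rw [hle_iff]
      refine Or.inr ?_
      have h2 := posQ_conj _ c h
      have he : c⁻¹ * (a⁻¹ * b) * c = (a * c)⁻¹ * (b * c) := by group
      rwa [he] at h2
  have hrmul_lt : ∀ (a b c : Γ ⧸ C), a < b → a * c < b * c := by
    intro a b c hab
    rw [hlt_iff] at hab ⊢
    have h2 := posQ_conj _ c hab
    have he : c⁻¹ * (a⁻¹ * b) * c = (a * c)⁻¹ * (b * c) := by group
    rwa [he] at h2
  have hinvanti : ∀ {X Y : Γ ⧸ C}, X ≤ Y → Y⁻¹ ≤ X⁻¹ := by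
    intro X Y h
    have h1 : Y⁻¹ * X ≤ Y⁻¹ * Y := hinvQ _ _ Y⁻¹ h
    rw [inv_mul_cancel] at h1
    have h2 := hrmul_le _ _ X⁻¹ h1
    rw [one_mul, mul_assoc, mul_inv_cancel, mul_one] at h2
    exact h2
  have hmkle : ∀ {x y : Γ}, x ≤ y → (x : Γ ⧸ C) ≤ (y : Γ ⧸ C) := by
    intro x y hxy
    rw [hle_iff]
    by_cases he : (x : Γ ⧸ C) = (y : Γ ⧸ C)
    · exact Or.inl he
    · refine Or.inr ?_
      have hne : x ≠ y := fun e => he (by rw [e])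
      have hxy' : x < y := lt_of_le_of_ne hxy hne
      have h1 : 1 < x⁻¹ * y := by simpa using lmul_lt hinv x⁻¹ hxy'
      have h2 : x⁻¹ * y ∉ C := fun hm => he ((QuotientGroup.eq).mpr hm)
      have he3 : ((x⁻¹ * y : Γ) : Γ ⧸ C) = ((x : Γ ⧸ C))⁻¹ * (y : Γ ⧸ C) := by
        rw [QuotientGroup.mk_mul, QuotientGroup.mk_inv]
      exact ⟨x⁻¹ * y, h1, h2, he3⟩
  have harchQ : ∀ q y : Γ ⧸ C, 1 < q → ∃ n : ℕ, y < q ^ n := by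
    intro q y hq
    have hq' : posQ q := by
      have h0 := (hlt_iff 1 q).mp hq
      simpa using h0
    obtain ⟨u, hu1, huC, rfl⟩ := hq'
    obtain ⟨x, rfl⟩ := QuotientGroup.mk_surjective y
    obtain ⟨n, hn, -⟩ := hstrong u hu1 huC x
    refine ⟨n + 1, ?_⟩
    have h1 : (x : Γ ⧸ C) ≤ (u : Γ ⧸ C) ^ n := by
      have h0 := hmkle hn.le
      rwa [QuotientGroup.mk_pow] at h0
    have hqq : (1 : Γ ⧸ C) < (u : Γ ⧸ C) := by
      rw [hlt_iff]
      simpa using (posQ_mk u).mpr ⟨hu1, huC⟩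
    have h2 : (u : Γ ⧸ C) ^ n < (u : Γ ⧸ C) ^ (n + 1) :=
      pow_lt_pow_of hinvQ hqq (Nat.lt_succ_self n)
    exact lt_of_le_of_lt h1 h2
  have hsw : ∀ d y : Γ ⧸ C, 1 < d → ∃ m : ℤ, d ^ m ≤ y ∧ y < d ^ (m + 1) := by
    intro d y hd
    obtain ⟨np, hup⟩ := harchQ d y hd
    obtain ⟨nm, hlow'⟩ := harchQ d y⁻¹ hd
    have hlow : d ^ (-(nm : ℤ)) < y := by
      have h1 : (1 : Γ ⧸ C) < y * d ^ (nm : ℕ) := by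
        have h0 := lmul_lt hinvQ y hlow'
        simpa using h0
      have h2 := hrmul_lt _ _ (d ^ (-(nm : ℤ))) h1
      rw [one_mul] at h2
      have he : y * d ^ (nm : ℕ) * d ^ (-(nm : ℤ)) = y := by
        rw [mul_assoc, ← zpow_natCast d nm, ← zpow_add]
        simp
      rwa [he] at h2
    have Hbdd : ∃ bnd : ℤ, ∀ z : ℤ, d ^ z ≤ y → z ≤ bnd := by
      refine ⟨(np : ℤ), ?_⟩
      intro z hz
      by_contra hc
      push_neg at hc
      have h3 : d ^ ((np : ℕ) : ℤ) < d ^ z := zpow_lt_zpow_of hinvQ hd hc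
      rw [zpow_natCast] at h3
      exact absurd (lt_of_lt_of_le h3 hz) (not_lt.mpr hup.le)
    have Hinh : ∃ z : ℤ, d ^ z ≤ y := ⟨-(nm : ℤ), hlow.le⟩
    obtain ⟨m, hm, hmax⟩ := Int.exists_greatest_of_bdd Hbdd Hinh
    refine ⟨m, hm, ?_⟩
    by_contra hc
    push_neg at hc
    exact absurd (hmax (m + 1) hc) (by omega)
  -- commutativity of the quotient
  have hcomm : ∀ q p : Γ ⧸ C, q * p = p * q := by
    have Hc : ∀ q p : Γ ⧸ C, ¬ (1 < (p * q)⁻¹ * (q * p)) := by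
      intro q p hc
      set c := (p * q)⁻¹ * (q * p) with hcdef
      by_cases hmin : ∃ t : Γ ⧸ C, 1 < t ∧ ∀ e : Γ ⧸ C, 1 < e → t ≤ e
      · obtain ⟨t, ht1, htmin⟩ := hmin
        have hrep : ∀ y : Γ ⧸ C, ∃ k : ℤ, y = t ^ k := by
          intro y
          obtain ⟨m, hm1, hm2⟩ := hsw t y ht1
          refine ⟨m, ?_⟩
          have h1 : (1 : Γ ⧸ C) ≤ t ^ (-m) * y := by
            have h0 := hinvQ _ _ (t ^ (-m)) hm1
            rw [← zpow_add] at h0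
            simpa using h0
          have h2 : t ^ (-m) * y < t := by
            have h0 := lmul_lt hinvQ (t ^ (-m)) hm2
            have he : t ^ (-m) * t ^ (m + 1) = t := by
              rw [← zpow_add]
              norm_num
            rwa [he] at h0
          rcases eq_or_lt_of_le h1 with he | hlt
          · have h3 : t ^ m * (t ^ (-m) * y) = y := by
              rw [← mul_assoc, ← zpow_add]
              simp
            rw [← he, mul_one] at h3
            exact h3.symm
          · exact absurd (htmin _ hlt) (not_le.mpr h2)
        obtain ⟨k1, hk1⟩ := hrep q
        obtain ⟨k2, hk2⟩ := hrep p
        have hqp : q * p = p * q := by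
          rw [hk1, hk2, ← zpow_add, ← zpow_add, add_comm]
        have hcc : (1 : Γ ⧸ C) < 1 := by
          have h4 : (p * q)⁻¹ * (q * p) = 1 := by rw [hqp, inv_mul_cancel]
          rwa [hcdef, h4] at hc
        exact absurd hcc (lt_irrefl _)
      · push_neg at hmin
        have hc1 : 1 < c := hc
        obtain ⟨e, he1, he2⟩ := hmin c hc1
        have hec : e < c := he2
        obtain ⟨d, hd1, hd2⟩ : ∃ d : Γ ⧸ C, 1 < d ∧ d * d ≤ c := by
          by_cases h2 : e * e ≤ c
          · exact ⟨e, he1, h2⟩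
          · push_neg at h2
            refine ⟨c * e⁻¹, ?_, ?_⟩
            · have h0 := hrmul_lt _ _ e⁻¹ hec
              simpa using h0
            · have hinner : e⁻¹ * c * e⁻¹ < 1 := by
                have h3 : e⁻¹ * c < e := by
                  have h0 := lmul_lt hinvQ e⁻¹ h2
                  have he4 : e⁻¹ * (e * e) = e := by group
                  rwa [he4] at h0
                have h0 := hrmul_lt _ _ e⁻¹ h3
                rw [mul_inv_cancel] at h0
                exact h0
              have hcalc : (c * e⁻¹) * (c * e⁻¹) = c * (e⁻¹ * c * e⁻¹) := by group
              rw [hcalc]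
              calc c * (e⁻¹ * c * e⁻¹) ≤ c * 1 := (lmul_lt hinvQ c hinner).le
                _ = c := mul_one c
        obtain ⟨m, hqm, hqm'⟩ := hsw d q hd1
        obtain ⟨n, hpn, hpn'⟩ := hsw d p hd1
        have hup : q * p < d ^ (m + 1) * d ^ (n + 1) := by
          calc q * p < d ^ (m + 1) * p := hrmul_lt _ _ p hqm'
            _ < d ^ (m + 1) * d ^ (n + 1) := lmul_lt hinvQ _ hpn'
        have hdown : d ^ n * d ^ m ≤ p * q := by
          calc d ^ n * d ^ m ≤ d ^ n * q := hinvQ _ _ _ hqm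
            _ ≤ p * q := hrmul_le _ _ q hpn
        have hstep1 : c ≤ (d ^ n * d ^ m)⁻¹ * (q * p) := by
          rw [hcdef]
          exact hrmul_le _ _ (q * p) (hinvanti hdown)
        have hstep2 : (d ^ n * d ^ m)⁻¹ * (q * p) <
            (d ^ n * d ^ m)⁻¹ * (d ^ (m + 1) * d ^ (n + 1)) :=
          lmul_lt hinvQ _ hup
        have he5 : (d ^ n * d ^ m)⁻¹ * (d ^ (m + 1) * d ^ (n + 1)) = d * d := by
          rw [← zpow_add, ← zpow_add, ← zpow_neg, ← zpow_add]
          have he6 : -(n + m) + (m + 1 + (n + 1)) = 2 := by ring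
          rw [he6, show (2 : ℤ) = 1 + 1 by norm_num, zpow_add, zpow_one]
        rw [he5] at hstep2
        have hfin : c < d * d := lt_of_le_of_lt hstep1 hstep2
        exact absurd (lt_of_lt_of_le hfin hd2) (lt_irrefl c)
    intro q p
    rcases lt_trichotomy (1 : Γ ⧸ C) ((p * q)⁻¹ * (q * p)) with h | h | h
    · exact absurd h (Hc q p)
    · exact (inv_mul_eq_one.mp h.symm).symm
    · have h2 : (1 : Γ ⧸ C) < ((p * q)⁻¹ * (q * p))⁻¹ := one_lt_inv_of hinvQ h
      have he : ((p * q)⁻¹ * (q * p))⁻¹ = (q * p)⁻¹ * (p * q) := by group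
      rw [he] at h2
      exact absurd h2 (Hc p q)
  -- endgame
  letI instCG : CommGroup (Γ ⧸ C) :=
    { (inferInstance : Group (Γ ⧸ C)) with mul_comm := hcomm }
  haveI : Nontrivial (Γ ⧸ C) := by
    refine ⟨⟨(gstar : Γ ⧸ C), 1, ?_⟩⟩
    rw [ne_eq, QuotientGroup.eq_one_iff]
    exact hgstarC
  haveI hfgΓ : Group.FG Γ := hfg
  haveI hfgQ : Group.FG (Γ ⧸ C) := Group.fg_of_surjective (QuotientGroup.mk'_surjective C)
  have htf : ∀ w : Γ ⧸ C, 1 < w → ∀ j : ℤ, 0 < j → w ^ j ≠ 1 := by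
    intro w hw j hj
    exact (one_lt_zpow_of hinvQ hw hj).ne'
  haveI : NoZeroSMulDivisors ℤ (Additive (Γ ⧸ C)) := by
    constructor
    intro k a hka
    by_contra hcon
    push_neg at hcon
    obtain ⟨hk0, ha0⟩ := hcon
    have h1 : (Additive.toMul a) ^ k = 1 := by
      have h0 := congrArg Additive.toMul hka
      rw [toMul_zsmul] at h0
      simpa using h0
    have hx1 : Additive.toMul a ≠ 1 := by
      intro e
      apply ha0
      have h2 : Additive.toMul a = Additive.toMul (0 : Additive (Γ ⧸ C)) := by simpa using e
      exact Additive.toMul.injective h2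
    rcases lt_trichotomy 1 (Additive.toMul a) with h | h | h
    · rcases lt_trichotomy 0 k with hk | hk | hk
      · exact htf _ h k hk h1
      · exact hk0 hk.symm
      · refine htf _ h (-k) (by omega) ?_
        rw [zpow_neg, h1, inv_one]
    · exact hx1 h.symm
    · have h2 : 1 < (Additive.toMul a)⁻¹ := one_lt_inv_of hinvQ h
      have h3 : ((Additive.toMul a)⁻¹) ^ k = 1 := by rw [inv_zpow, h1, inv_one]
      rcases lt_trichotomy 0 k with hk | hk | hk
      · exact htf _ h2 k hk h3
      · exact hk0 hk.symm
      · refine htf _ h2 (-k) (by omega) ?_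
        rw [zpow_neg, h3, inv_one]
  haveI hMF : Module.Finite ℤ (Additive (Γ ⧸ C)) :=
    Module.Finite.iff_addGroup_fg.mpr (GroupFG.iff_add_fg.mp hfgQ)
  haveI hfree : Module.Free ℤ (Additive (Γ ⧸ C)) :=
    Module.free_of_finite_type_torsion_free'
  obtain ⟨i⟩ : Nonempty (Module.Free.ChooseBasisIndex ℤ (Additive (Γ ⧸ C))) := inferInstance
  set b := Module.Free.chooseBasis ℤ (Additive (Γ ⧸ C)) with hb
  set φ : Additive (Γ ⧸ C) →ₗ[ℤ] ℤ := b.coord i with hφ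
  have hφs : Function.Surjective φ := by
    intro k
    refine ⟨k • b i, ?_⟩
    rw [hφ, map_smul]
    simp [Module.Basis.coord_apply, Module.Basis.repr_self]
  set ψ : (Γ ⧸ C) →* Multiplicative ℤ := AddMonoidHom.toMultiplicativeRight φ.toAddMonoidHom with hψ
  have hψs : Function.Surjective ψ := by
    intro k
    obtain ⟨a, ha⟩ := hφs (Multiplicative.toAdd k)
    refine ⟨Additive.toMul a, ?_⟩
    rw [hψ]
    simp only [AddMonoidHom.coe_toMultiplicativeRight, Function.comp_apply]
    simp [ha]
  refine ⟨ψ.comp (QuotientGroup.mk' C), ?_⟩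
  rw [MonoidHom.coe_comp]
  exact hψs.comp (QuotientGroup.mk'_surjective C)

end Stmt12

/-- A group with a Conradian left-order is locally indicable: every
nontrivial finitely generated subgroup surjects onto `ℤ`. -/
theorem stmt12 {G : Type*} [Group G] [LinearOrder G]
    (hinv : ∀ a b c : G, a ≤ b → c * a ≤ c * b)
    (hconrad : ∀ a b : G, 1 < a → 1 < b → ∃ n : ℕ, a * b < (b * a) ^ n) :
    ∀ H : Subgroup G, H ≠ ⊥ → H.FG →
      ∃ f : ↥H →* Multiplicative ℤ, Function.Surjective f := by
  intro H hne hfg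
  haveI : Nontrivial ↥H := (Subgroup.nontrivial_iff_ne_bot H).mpr hne
  have hinv' : ∀ a b c : ↥H, a ≤ b → c * a ≤ c * b := by
    intro a b c h
    have h2 : (a : G) ≤ (b : G) := h
    have h3 := hinv (a : G) (b : G) (c : G) h2
    exact_mod_cast h3
  have hconrad' : ∀ a b : ↥H, 1 < a → 1 < b → ∃ n : ℕ, a * b < (b * a) ^ n := by
    intro a b ha hb
    have ha' : (1 : G) < (a : G) := by exact_mod_cast ha
    have hb' : (1 : G) < (b : G) := by exact_mod_cast hb
    obtain ⟨n, hn⟩ := hconrad (a : G) (b : G) ha' hb'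
    refine ⟨n, ?_⟩
    have hgoal : ((a * b : ↥H) : G) < (((b * a) ^ n : ↥H) : G) := by
      push_cast
      exact hn
    exact_mod_cast hgoal
  have hfg' : Group.FG ↥H := (Group.fg_iff_subgroup_fg H).mpr hfg
  exact Stmt12.core hinv' hconrad' hfg'
end

section
/- Let R = F[G, η, α] be a crossed product of a left-ordered group G over a skew field F. Then R is an integral domain: the product of two nonzero elements is nonzero. -/
/-!
Left-invariance of the order makes `G` a unique-product group: for finite nonempty `A, B ⊆ G`
some product `a₀ b₀` is attained by exactly one pair of `A × B`. Multiplying two nonzero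
elements `∑ cₐ xₐ` and `∑ d_b x_b` with `cₐ, d_b ≠ 0` on their supports, the coefficient of
`x_{a₀ b₀}` in the product is therefore the single term `c_{a₀} α_{a₀}(d_{b₀}) η(a₀, b₀)`,
which is nonzero because `F` is a division ring, `α_{a₀}` is injective and `η` takes unit
values; by independence of the `x_g` the product is nonzero.
-/

open Finset

theorem UniqueProds.of_mul_le_mul_left {G : Type*} [Group G] [LinearOrder G]
    (hinv : ∀ a b c : G, a ≤ b → c * a ≤ c * b) : UniqueProds G :=
  have : MulLeftMono G := ⟨fun c _ _ h => hinv _ _ c h⟩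
  inferInstance

namespace CrossedProduct

theorem exists_repr_of_ne_zero {F S G : Type*} [Semiring F] [Semiring S]
    {ι : F →+* S} {x : G → S}
    (hspan : ∀ y : S, ∃ (s : Finset G) (c : G → F), y = ∑ g ∈ s, ι (c g) * x g)
    {y : S} (hy : y ≠ 0) :
    ∃ (s : Finset G) (c : G → F), s.Nonempty ∧ (∀ g ∈ s, c g ≠ 0) ∧
      y = ∑ g ∈ s, ι (c g) * x g := by
  classical
  obtain ⟨s, c, rfl⟩ := hspan y
  have hsum : ∑ g ∈ s with c g ≠ 0, ι (c g) * x g = ∑ g ∈ s, ι (c g) * x g :=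
    sum_filter_of_ne fun g _ hne hc => hne (by rw [hc, map_zero, zero_mul])
  refine ⟨{g ∈ s | c g ≠ 0}, c, ?_, fun g hg => (mem_filter.mp hg).2, hsum.symm⟩
  exact nonempty_iff_ne_empty.mpr fun h => hy (by rw [← hsum, h, sum_empty])

variable {F S G : Type*} [Semiring F] [Semiring S] [Mul G]
  (ι : F →+* S) (x : G → S) (η : G → G → Fˣ) (α : G → F ≃+* F)

def convCoeff [DecidableEq G] (s t : Finset G) (c d : G → F) (k : G) : F :=
  ∑ p ∈ s ×ˢ t with p.1 * p.2 = k, c p.1 * α p.1 (d p.2) * η p.1 p.2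

variable {ι x η α}

theorem basis_mul_basis (hmul : ∀ g h : G, x g * x h = ι (η g h) * x (g * h))
    (hcomm : ∀ (g : G) (a : F), x g * ι a = ι (α g a) * x g) (a b : F) (g h : G) :
    ι a * x g * (ι b * x h) = ι (a * α g b * η g h) * x (g * h) := by
  calc ι a * x g * (ι b * x h) = ι a * ((x g * ι b) * x h) := by simp only [mul_assoc]
    _ = ι a * ι (α g b) * (x g * x h) := by rw [hcomm]; simp only [mul_assoc]
    _ = ι (a * α g b * η g h) * x (g * h) := by rw [hmul]; simp only [map_mul, mul_assoc]

theorem sum_mul_sum [DecidableEq G] (hmul : ∀ g h : G, x g * x h = ι (η g h) * x (g * h))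
    (hcomm : ∀ (g : G) (a : F), x g * ι a = ι (α g a) * x g) (s t : Finset G) (c d : G → F) :
    (∑ g ∈ s, ι (c g) * x g) * (∑ h ∈ t, ι (d h) * x h) =
      ∑ k ∈ (s ×ˢ t).image (fun p => p.1 * p.2), ι (convCoeff η α s t c d k) * x k := by
  rw [Finset.sum_mul_sum, ← sum_product', ← sum_fiberwise_of_maps_to (t := (s ×ˢ t).image _)
    (g := fun p : G × G => p.1 * p.2) (fun p hp => mem_image_of_mem _ hp)]
  refine sum_congr rfl fun k _ => ?_
  rw [convCoeff, map_sum, sum_mul]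
  refine sum_congr rfl fun p hp => ?_
  rw [basis_mul_basis hmul hcomm, (mem_filter.mp hp).2]

theorem convCoeff_of_uniqueMul [DecidableEq G] {s t : Finset G} {a₀ b₀ : G}
    (ha₀ : a₀ ∈ s) (hb₀ : b₀ ∈ t) (huniq : UniqueMul s t a₀ b₀) (c d : G → F) :
    convCoeff η α s t c d (a₀ * b₀) = c a₀ * α a₀ (d b₀) * η a₀ b₀ := by
  have hfiber : {p ∈ s ×ˢ t | p.1 * p.2 = a₀ * b₀} = {(a₀, b₀)} := by
    ext ⟨a, b⟩
    simp only [mem_filter, mem_product, mem_singleton, Prod.mk.injEq]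
    constructor
    · rintro ⟨⟨ha, hb⟩, hab⟩
      exact huniq ha hb hab
    · rintro ⟨rfl, rfl⟩
      exact ⟨⟨ha₀, hb₀⟩, rfl⟩
  rw [convCoeff, hfiber, sum_singleton]

theorem mul_ne_zero [NoZeroDivisors F] [Nontrivial F] [UniqueProds G]
    (hmul : ∀ g h : G, x g * x h = ι (η g h) * x (g * h))
    (hcomm : ∀ (g : G) (a : F), x g * ι a = ι (α g a) * x g)
    (hindep : ∀ (s : Finset G) (c : G → F),
      ∑ g ∈ s, ι (c g) * x g = 0 → ∀ g ∈ s, c g = 0)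
    (hspan : ∀ y : S, ∃ (s : Finset G) (c : G → F), y = ∑ g ∈ s, ι (c g) * x g)
    {y z : S} (hy : y ≠ 0) (hz : z ≠ 0) : y * z ≠ 0 := by
  classical
  obtain ⟨s, c, hs, hc, rfl⟩ := exists_repr_of_ne_zero hspan hy
  obtain ⟨t, d, ht, hd, rfl⟩ := exists_repr_of_ne_zero hspan hz
  obtain ⟨a₀, ha₀, b₀, hb₀, huniq⟩ := UniqueProds.uniqueMul_of_nonempty hs ht
  intro hzero
  rw [sum_mul_sum hmul hcomm] at hzero
  have hcoeff := hindep _ _ hzero (a₀ * b₀) (mem_image_of_mem _ (mk_mem_product ha₀ hb₀))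
  rw [convCoeff_of_uniqueMul ha₀ hb₀ huniq] at hcoeff
  exact _root_.mul_ne_zero (_root_.mul_ne_zero (hc a₀ ha₀) ((map_ne_zero_iff _ (α a₀).injective).mpr (hd b₀ hb₀)))
    (η a₀ b₀).ne_zero hcoeff

end CrossedProduct

theorem stmt14_general {F S G : Type*} [DivisionRing F] [Ring S] [Group G] [LinearOrder G]
    (hinv : ∀ a b c : G, a ≤ b → c * a ≤ c * b)
    (ι : F →+* S) (x : G → S) (η : G → G → Fˣ) (α : G → F ≃+* F)
    (hmul : ∀ g h : G, x g * x h = ι (η g h) * x (g * h))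
    (hcomm : ∀ (g : G) (a : F), x g * ι a = ι (α g a) * x g)
    (hindep : ∀ (s : Finset G) (c : G → F),
      ∑ g ∈ s, ι (c g) * x g = 0 → ∀ g ∈ s, c g = 0)
    (hspan : ∀ y : S, ∃ (s : Finset G) (c : G → F), y = ∑ g ∈ s, ι (c g) * x g) :
    ∀ y z : S, y ≠ 0 → z ≠ 0 → y * z ≠ 0 := by
  have := UniqueProds.of_mul_le_mul_left hinv
  exact fun _ _ hy hz => CrossedProduct.mul_ne_zero hmul hcomm hindep hspan hy hz

/-- A crossed product `F[G, η, α]` of a left-ordered group `G` over a skew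
field `F` (given by `ι : F → S`, a spanning, left-`F`-independent basis `x : G → S` with
the crossed-product multiplication rules) is an integral domain. -/
theorem stmt14 {F S G : Type*} [DivisionRing F] [Ring S] [Group G] [LinearOrder G]
    (hinv : ∀ a b c : G, a ≤ b → c * a ≤ c * b)
    (ι : F →+* S) (x : G → S) (η : G → G → Fˣ) (α : G → F ≃+* F)
    (hx1 : x 1 = 1)
    (hmul : ∀ g h : G, x g * x h = ι (η g h) * x (g * h))
    (hcomm : ∀ (g : G) (a : F), x g * ι a = ι (α g a) * x g)
    (hindep : ∀ (s : Finset G) (c : G → F),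
      ∑ g ∈ s, ι (c g) * x g = 0 → ∀ g ∈ s, c g = 0)
    (hspan : ∀ y : S, ∃ (s : Finset G) (c : G → F), y = ∑ g ∈ s, ι (c g) * x g) :
    ∀ y z : S, y ≠ 0 → z ≠ 0 → y * z ≠ 0 :=
  stmt14_general hinv ι x η α hmul hcomm hindep hspan
end

section
/- Let R = F[G, η, α] be a crossed product of a left-ordered group G over a skew field F and let φ : R → R be a ring automorphism. Then φ(F) = F and φ(F^× X_G) = F^× X_G. -/
set_option linter.unusedSectionVars false

section CrossedAux

variable {F S G : Type*} [DivisionRing F] [Ring S] [Group G] [LinearOrder G]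

/-- The additive map sending a finitely supported function to the corresponding
crossed-product element. -/
noncomputable def myT (ι : F →+* S) (x : G → S) : (G →₀ F) →+ S :=
  Finsupp.liftAddHom fun g => (AddMonoidHom.mulRight (x g)).comp ι.toAddMonoidHom

lemma myT_single (ι : F →+* S) (x : G → S) (g : G) (a : F) :
    myT ι x (Finsupp.single g a) = ι a * x g := by
  simp [myT]

lemma myT_apply (ι : F →+* S) (x : G → S) (f : G →₀ F) :
    myT ι x f = ∑ g ∈ f.support, ι (f g) * x g := by
  simp [myT, Finsupp.liftAddHom_apply, Finsupp.sum]

lemma myT_inj (ι : F →+* S) (x : G → S)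
    (hindep : ∀ (s : Finset G) (c : G → F),
      ∑ g ∈ s, ι (c g) * x g = 0 → ∀ g ∈ s, c g = 0) :
    Function.Injective (myT ι x) := by
  rw [injective_iff_map_eq_zero]
  intro f hf
  ext g
  by_cases hg : g ∈ f.support
  · exact hindep f.support f (by rw [← myT_apply]; exact hf) g hg
  · simpa using Finsupp.notMem_support_iff.mp hg

lemma myT_surj (ι : F →+* S) (x : G → S)
    (hspan : ∀ y : S, ∃ (s : Finset G) (c : G → F), y = ∑ g ∈ s, ι (c g) * x g)
    (y : S) : ∃ f : G →₀ F, myT ι x f = y := by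
  obtain ⟨s, c, rfl⟩ := hspan y
  refine ⟨∑ g ∈ s, Finsupp.single g (c g), ?_⟩
  rw [map_sum]
  exact Finset.sum_congr rfl fun g _ => myT_single ι x g (c g)

lemma key_term (ι : F →+* S) (x : G → S) (η : G → G → Fˣ) (α : G → F ≃+* F)
    (hmul : ∀ g h : G, x g * x h = ι (η g h) * x (g * h))
    (hcomm : ∀ (g : G) (a : F), x g * ι a = ι (α g a) * x g)
    (a b : F) (g h : G) :
    (ι a * x g) * (ι b * x h) = ι (a * α g b * η g h) * x (g * h) := by
  have : x g * (ι b * x h) = ι (α g b * η g h) * x (g * h) := by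
    rw [← mul_assoc, hcomm, mul_assoc, hmul, ← mul_assoc, ← map_mul]
  rw [mul_assoc, this, ← mul_assoc, ← map_mul, mul_assoc a]

lemma myT_mul (ι : F →+* S) (x : G → S) (η : G → G → Fˣ) (α : G → F ≃+* F)
    (hmul : ∀ g h : G, x g * x h = ι (η g h) * x (g * h))
    (hcomm : ∀ (g : G) (a : F), x g * ι a = ι (α g a) * x g)
    (f f' : G →₀ F) :
    myT ι x f * myT ι x f' =
      myT ι x (∑ p ∈ f.support ×ˢ f'.support,
        Finsupp.single (p.1 * p.2) (f p.1 * α p.1 (f' p.2) * η p.1 p.2)) := by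
  rw [map_sum, myT_apply, myT_apply, Finset.sum_mul_sum, Finset.sum_product]
  exact Finset.sum_congr rfl fun g _ => Finset.sum_congr rfl fun h _ => by
    rw [key_term ι x η α hmul hcomm, myT_single]

end CrossedAux

section CrossedMain

variable {F S G : Type*} [DivisionRing F] [Ring S] [Group G] [LinearOrder G]
  (hinv : ∀ a b c : G, a ≤ b → c * a ≤ c * b)
  (ι : F →+* S) (x : G → S) (η : G → G → Fˣ) (α : G → F ≃+* F)
  (hx1 : x 1 = 1)
  (hmul : ∀ g h : G, x g * x h = ι (η g h) * x (g * h))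
  (hcomm : ∀ (g : G) (a : F), x g * ι a = ι (α g a) * x g)
  (hindep : ∀ (s : Finset G) (c : G → F),
    ∑ g ∈ s, ι (c g) * x g = 0 → ∀ g ∈ s, c g = 0)
  (hspan : ∀ y : S, ∃ (s : Finset G) (c : G → F), y = ∑ g ∈ s, ι (c g) * x g)

include hinv hx1 hmul hcomm hindep hspan in
lemma unit_form {y z : S} (hyz : y * z = 1) :
    ∃ (a : Fˣ) (g : G), y = ι a * x g := by
  have hnt : (0 : S) ≠ 1 := by
    intro h01
    have := hindep {1} (fun _ => 1) (by simp [hx1, ← h01]) 1 (by simp)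
    exact one_ne_zero this
  obtain ⟨f, hf⟩ := myT_surj ι x hspan y
  obtain ⟨f', hf'⟩ := myT_surj ι x hspan z
  set e : G →₀ F := ∑ p ∈ f.support ×ˢ f'.support,
      Finsupp.single (p.1 * p.2) (f p.1 * α p.1 (f' p.2) * η p.1 p.2) with he_def
  have he : myT ι x e = 1 := by
    rw [← myT_mul ι x η α hmul hcomm, hf, hf', hyz]
  have he1 : e = Finsupp.single 1 1 := by
    apply myT_inj ι x hindep
    rw [he, myT_single, map_one, one_mul, hx1]
  -- supports nonempty
  have hA : f.support.Nonempty := by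
    rw [Finset.nonempty_iff_ne_empty]
    intro h
    apply hnt
    rw [← hyz]
    have : f = 0 := Finsupp.support_eq_empty.mp h
    rw [← hf, this, map_zero, zero_mul]
  have hB : f'.support.Nonempty := by
    rw [Finset.nonempty_iff_ne_empty]
    intro h
    apply hnt
    rw [← hyz]
    have : f' = 0 := Finsupp.support_eq_empty.mp h
    rw [← hf', this, map_zero, mul_zero]
  have heval : ∀ k : G, e k =
      ∑ p ∈ (f.support ×ˢ f'.support).filter (fun p => p.1 * p.2 = k),
        f p.1 * α p.1 (f' p.2) * η p.1 p.2 := by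
    intro k
    rw [he_def, Finset.sum_apply', Finset.sum_filter]
    exact Finset.sum_congr rfl fun p _ => Finsupp.single_apply
  set K : Finset G := (f.support ×ˢ f'.support).image (fun p => p.1 * p.2) with hK_def
  have hK : K.Nonempty := Finset.Nonempty.image (hA.product hB) _
  -- generic extremal-fiber fact
  have fiber : ∀ (M b : G), M ∈ K → b ∈ f'.support →
      (∀ p : G × G, p ∈ f.support ×ˢ f'.support → p.1 * p.2 = M →
        (∀ h' ∈ f'.support, h' = p.2 → False) → False) →
      False → True := fun _ _ _ _ _ _ => trivial
  -- the maximum of K is 1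
  have hmax : K.max' hK = 1 := by
    set M := K.max' hK with hM
    set b := f'.support.max' hB with hb
    have huniq : ∀ p : G × G, p ∈ (f.support ×ˢ f'.support).filter
        (fun p => p.1 * p.2 = M) → p = (M * b⁻¹, b) := by
      rintro ⟨g, h⟩ hp
      rw [Finset.mem_filter, Finset.mem_product] at hp
      obtain ⟨⟨hg, hh⟩, hgh⟩ := hp
      have hhb : h = b := by
        have hub : ∀ h' ∈ f'.support, h' ≤ h := by
          intro h' hh'
          by_contra hc
          push_neg at hc
          have h1 : g * h ≤ g * h' := hinv h h' g hc.le
          have h2 : g * h' ≤ M := Finset.le_max' K (g * h')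
            (Finset.mem_image.mpr ⟨(g, h'), Finset.mem_product.mpr ⟨hg, hh'⟩, rfl⟩)
          have : g * h' = g * h := le_antisymm (hgh ▸ h2) h1
          exact absurd (mul_left_cancel this) hc.ne'
        exact le_antisymm (Finset.le_max' _ _ hh) (hub _ (f'.support.max'_mem hB))
      refine Prod.ext ?_ hhb
      show g = M * b⁻¹
      rw [hhb] at hgh
      exact eq_mul_inv_of_mul_eq hgh
    obtain ⟨p0, hp0, hp0M⟩ := Finset.mem_image.mp (K.max'_mem hK)
    have hp0f : p0 ∈ (f.support ×ˢ f'.support).filter (fun p => p.1 * p.2 = M) :=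
      Finset.mem_filter.mpr ⟨hp0, hp0M⟩
    have hfil : (f.support ×ˢ f'.support).filter (fun p => p.1 * p.2 = M)
        = {(M * b⁻¹, b)} := by
      apply Finset.eq_singleton_iff_unique_mem.mpr
      exact ⟨huniq p0 hp0f ▸ hp0f, huniq⟩
    have hmem : (M * b⁻¹, b) ∈ f.support ×ˢ f'.support := by
      have := huniq p0 hp0f ▸ hp0
      exact this
    rw [Finset.mem_product] at hmem
    have heM : e M = f (M * b⁻¹) * α (M * b⁻¹) (f' b) * η (M * b⁻¹) b := by
      rw [heval, hfil, Finset.sum_singleton]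
    have hne : e M ≠ 0 := by
      rw [heM]
      refine mul_ne_zero (mul_ne_zero ?_ ?_) (Units.ne_zero _)
      · exact Finsupp.mem_support_iff.mp hmem.1
      · intro h0
        exact Finsupp.mem_support_iff.mp hmem.2 ((α (M * b⁻¹)).injective (by simpa using h0))
    by_contra hM1
    rw [he1, Finsupp.single_apply, if_neg (fun h => hM1 h.symm)] at hne
    exact hne rfl
  -- the minimum of K is 1
  have hmin : K.min' hK = 1 := by
    set M := K.min' hK with hM
    set b := f'.support.min' hB with hb
    have huniq : ∀ p : G × G, p ∈ (f.support ×ˢ f'.support).filter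
        (fun p => p.1 * p.2 = M) → p = (M * b⁻¹, b) := by
      rintro ⟨g, h⟩ hp
      rw [Finset.mem_filter, Finset.mem_product] at hp
      obtain ⟨⟨hg, hh⟩, hgh⟩ := hp
      have hhb : h = b := by
        have hub : ∀ h' ∈ f'.support, h ≤ h' := by
          intro h' hh'
          by_contra hc
          push_neg at hc
          have h1 : g * h' ≤ g * h := hinv h' h g hc.le
          have h2 : M ≤ g * h' := Finset.min'_le K (g * h')
            (Finset.mem_image.mpr ⟨(g, h'), Finset.mem_product.mpr ⟨hg, hh'⟩, rfl⟩)
          have : g * h' = g * h := le_antisymm h1 (hgh ▸ h2)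
          exact absurd (mul_left_cancel this) hc.ne
        exact le_antisymm (hub _ (f'.support.min'_mem hB)) (Finset.min'_le _ _ hh)
      refine Prod.ext ?_ hhb
      show g = M * b⁻¹
      rw [hhb] at hgh
      exact eq_mul_inv_of_mul_eq hgh
    obtain ⟨p0, hp0, hp0M⟩ := Finset.mem_image.mp (K.min'_mem hK)
    have hp0f : p0 ∈ (f.support ×ˢ f'.support).filter (fun p => p.1 * p.2 = M) :=
      Finset.mem_filter.mpr ⟨hp0, hp0M⟩
    have hfil : (f.support ×ˢ f'.support).filter (fun p => p.1 * p.2 = M)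
        = {(M * b⁻¹, b)} := by
      apply Finset.eq_singleton_iff_unique_mem.mpr
      exact ⟨huniq p0 hp0f ▸ hp0f, huniq⟩
    have hmem : (M * b⁻¹, b) ∈ f.support ×ˢ f'.support := by
      have := huniq p0 hp0f ▸ hp0
      exact this
    rw [Finset.mem_product] at hmem
    have heM : e M = f (M * b⁻¹) * α (M * b⁻¹) (f' b) * η (M * b⁻¹) b := by
      rw [heval, hfil, Finset.sum_singleton]
    have hne : e M ≠ 0 := by
      rw [heM]
      refine mul_ne_zero (mul_ne_zero ?_ ?_) (Units.ne_zero _)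
      · exact Finsupp.mem_support_iff.mp hmem.1
      · intro h0
        exact Finsupp.mem_support_iff.mp hmem.2 ((α (M * b⁻¹)).injective (by simpa using h0))
    by_contra hM1
    rw [he1, Finsupp.single_apply, if_neg (fun h => hM1 h.symm)] at hne
    exact hne rfl
  -- hence K = {1}
  have hK1 : ∀ k ∈ K, k = 1 := fun k hk =>
    le_antisymm (hmax ▸ Finset.le_max' K k hk) (hmin ▸ Finset.min'_le K k hk)
  set b := f'.support.max' hB with hb
  have hbB : b ∈ f'.support := f'.support.max'_mem hB
  have hsingle : f.support = {b⁻¹} := by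
    apply Finset.eq_singleton_iff_unique_mem.mpr
    constructor
    · obtain ⟨g0, hg0⟩ := hA
      have : g0 * b = 1 := hK1 _ (Finset.mem_image.mpr
        ⟨(g0, b), Finset.mem_product.mpr ⟨hg0, hbB⟩, rfl⟩)
      have hg0b : g0 = b⁻¹ := eq_inv_iff_mul_eq_one.mpr this
      rwa [hg0b] at hg0
    · intro g hg
      have : g * b = 1 := hK1 _ (Finset.mem_image.mpr
        ⟨(g, b), Finset.mem_product.mpr ⟨hg, hbB⟩, rfl⟩)
      rw [eq_inv_iff_mul_eq_one]; exact this
  have hfb : f b⁻¹ ≠ 0 := by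
    apply Finsupp.mem_support_iff.mp
    rw [hsingle]; exact Finset.mem_singleton_self _
  refine ⟨Units.mk0 (f b⁻¹) hfb, b⁻¹, ?_⟩
  rw [← hf, myT_apply, hsingle, Finset.sum_singleton]
  rfl

include hx1 hmul hcomm in
lemma xg_isUnit (g : G) : IsUnit (x g) := by
  set c : F := (((η g g⁻¹)⁻¹ : Fˣ) : F) with hc
  set c' : F := (((η g⁻¹ g)⁻¹ : Fˣ) : F) with hc'
  set r : S := x g⁻¹ * ι c with hr_def
  set l : S := ι c' * x g⁻¹ with hl_def
  have hr : x g * r = 1 := by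
    rw [hr_def, ← mul_assoc, hmul, mul_inv_cancel, hx1, mul_one, ← map_mul, hc]
    rw [← Units.val_mul, mul_inv_cancel, Units.val_one, map_one]
  have hl : l * x g = 1 := by
    rw [hl_def, mul_assoc, hmul, inv_mul_cancel, hx1, mul_one, ← map_mul, hc']
    rw [← Units.val_mul, inv_mul_cancel, Units.val_one, map_one]
  have hlr : l = r := by
    rw [← mul_one l, ← hr, ← mul_assoc, hl, one_mul]
  exact ⟨⟨x g, r, hr, hlr ▸ hl⟩, rfl⟩

include hinv hx1 hmul hcomm hindep hspan in
lemma isUnit_iff_form (u : S) :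
    IsUnit u ↔ ∃ (a : Fˣ) (g : G), u = ι a * x g := by
  constructor
  · rintro ⟨v, rfl⟩
    exact unit_form hinv ι x η α hx1 hmul hcomm hindep hspan (v.mul_inv)
  · rintro ⟨a, g, rfl⟩
    exact (a.isUnit.map ι).mul (xg_isUnit ι x η α hx1 hmul hcomm g)

include hinv hx1 hmul hcomm hindep hspan in
lemma mem_range_iff_char (u : S) :
    u ∈ Set.range ι ↔ (u = 0 ∨ (IsUnit u ∧ (u = 1 ∨ IsUnit (u - 1)))) := by
  constructor
  · rintro ⟨a, rfl⟩
    by_cases ha : a = 0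
    · exact Or.inl (by rw [ha, map_zero])
    refine Or.inr ⟨(isUnit_iff_form hinv ι x η α hx1 hmul hcomm hindep hspan _).mpr
      ⟨Units.mk0 a ha, 1, by rw [hx1, mul_one]; rfl⟩, ?_⟩
    by_cases ha1 : a = 1
    · exact Or.inl (by rw [ha1, map_one])
    · refine Or.inr ((isUnit_iff_form hinv ι x η α hx1 hmul hcomm hindep hspan _).mpr
        ⟨Units.mk0 (a - 1) (sub_ne_zero.mpr ha1), 1, ?_⟩)
      rw [hx1, mul_one, Units.val_mk0, map_sub, map_one]
  · rintro (rfl | ⟨hu, h1 | hu1⟩)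
    · exact ⟨0, map_zero ι⟩
    · exact ⟨1, by rw [map_one, h1]⟩
    · obtain ⟨a, g, rfl⟩ :=
        (isUnit_iff_form hinv ι x η α hx1 hmul hcomm hindep hspan _).mp hu
      obtain ⟨b, h, hb⟩ :=
        (isUnit_iff_form hinv ι x η α hx1 hmul hcomm hindep hspan _).mp hu1
      have heq : Finsupp.single g (a : F) - Finsupp.single 1 1
          = Finsupp.single h (b : F) := by
        apply myT_inj ι x hindep
        rw [map_sub, myT_single, myT_single, myT_single, map_one, one_mul, hx1, hb]
      have hg1 : g = 1 := by
        by_contra hg1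
        have e1 := DFunLike.congr_fun heq 1
        rw [Finsupp.sub_apply, Finsupp.single_apply, if_neg hg1,
          Finsupp.single_apply, if_pos rfl, zero_sub] at e1
        have hh1 : h = 1 := by
          by_contra hh1
          rw [Finsupp.single_apply, if_neg hh1] at e1
          exact one_ne_zero (neg_eq_zero.mp e1)
        rw [hh1, Finsupp.single_apply, if_pos rfl] at e1
        -- b = -1, so single h b + single 1 1 = 0, hence single g a = 0
        have : Finsupp.single g (a : F) = 0 := by
          rw [sub_eq_iff_eq_add] at heq
          rw [heq, hh1, ← e1]
          rw [← Finsupp.single_add]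
          simp
        exact a.ne_zero (Finsupp.single_eq_zero.mp this)
      exact ⟨a, by rw [hg1, hx1, mul_one]⟩

end CrossedMain

/-- A ring automorphism `φ` of a crossed product `F[G, η, α]` of a
left-ordered group over a skew field satisfies `φ(F) = F` and `φ(F^× X_G) = F^× X_G`. -/
theorem stmt16 {F S G : Type*} [DivisionRing F] [Ring S] [Group G] [LinearOrder G]
    (hinv : ∀ a b c : G, a ≤ b → c * a ≤ c * b)
    (ι : F →+* S) (x : G → S) (η : G → G → Fˣ) (α : G → F ≃+* F)
    (hx1 : x 1 = 1)
    (hmul : ∀ g h : G, x g * x h = ι (η g h) * x (g * h))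
    (hcomm : ∀ (g : G) (a : F), x g * ι a = ι (α g a) * x g)
    (hindep : ∀ (s : Finset G) (c : G → F),
      ∑ g ∈ s, ι (c g) * x g = 0 → ∀ g ∈ s, c g = 0)
    (hspan : ∀ y : S, ∃ (s : Finset G) (c : G → F), y = ∑ g ∈ s, ι (c g) * x g)
    (φ : S ≃+* S) :
    (⇑φ '' Set.range ι = Set.range ι) ∧
    (⇑φ '' {s : S | ∃ (a : Fˣ) (g : G), s = ι a * x g} =
      {s : S | ∃ (a : Fˣ) (g : G), s = ι a * x g}) := by
  have charU : ∀ u : S, IsUnit u ↔ ∃ (a : Fˣ) (g : G), u = ι a * x g :=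
    fun u => isUnit_iff_form hinv ι x η α hx1 hmul hcomm hindep hspan u
  have charR : ∀ u : S, u ∈ Set.range ι ↔ (u = 0 ∨ (IsUnit u ∧ (u = 1 ∨ IsUnit (u - 1)))) :=
    fun u => mem_range_iff_char hinv ι x η α hx1 hmul hcomm hindep hspan u
  have hUnit : ∀ ψ : S ≃+* S, ∀ u : S, IsUnit u → IsUnit (ψ u) := by
    intro ψ u h
    exact h.map ψ.toRingHom
  have htrans : ∀ ψ : S ≃+* S, ∀ u : S, u ∈ Set.range ι → ψ u ∈ Set.range ι := by
    intro ψ u hu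
    rw [charR] at hu
    rw [charR]
    rcases hu with rfl | ⟨h1, h2⟩
    · exact Or.inl (map_zero ψ)
    · refine Or.inr ⟨hUnit ψ u h1, ?_⟩
      rcases h2 with h2 | h2
      · exact Or.inl (by rw [h2, map_one])
      · refine Or.inr ?_
        have := hUnit ψ _ h2
        rwa [map_sub, map_one] at this
  have htransU : ∀ ψ : S ≃+* S, ∀ u : S,
      u ∈ {s : S | ∃ (a : Fˣ) (g : G), s = ι a * x g} →
      ψ u ∈ {s : S | ∃ (a : Fˣ) (g : G), s = ι a * x g} := by
    intro ψ u hu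
    rw [Set.mem_setOf_eq, ← charU] at hu
    rw [Set.mem_setOf_eq, ← charU]
    exact hUnit ψ u hu
  constructor
  · apply Set.eq_of_subset_of_subset
    · rintro v ⟨u, hu, rfl⟩
      exact htrans φ u hu
    · intro v hv
      exact ⟨φ.symm v, htrans φ.symm v hv, φ.apply_symm_apply v⟩
  · apply Set.eq_of_subset_of_subset
    · rintro v ⟨u, hu, rfl⟩
      exact htransU φ u hu
    · intro v hv
      exact ⟨φ.symm v, htransU φ.symm v hv, φ.apply_symm_apply v⟩
end
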